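/- arXiv:2602.09265 — 5 statements merged into one kernel-verified Lean document; each statement's English description precedes it below -/
import Mathlib

section
/- Let H = ℝ^m with inner product ⟨·,·⟩, V a Hilbert space, a : V × V → ℝ a bounded bilinear form coercive on the kernel K = {v ∈ V : b(v, μ) = 0 ∀μ ∈ ℝ^m}, and b : V × ℝ^m → ℝ bounded bilinear satisfying the inf-sup condition inf_{μ≠0} sup_{v≠0} b(v,μ)/(‖v‖‖μ‖) ≥ β > 0. Then for every bounded linear functional f on V the saddle point problem: find (u, λ) ∈ V × ℝ^m with a(u,q) + b(q,λ) = f(q) for all q ∈ V and b(u,μ) = 0 for all μ ∈ ℝ^m, has a unique solution. -/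
noncomputable section

set_option maxHeartbeats 2000000

/-- Babuška–Brezzi theorem with finite-dimensional multiplier space `ℝ^m`:
if the bounded bilinear form `a` is coercive on the kernel
`K = {v : b(v,μ) = 0 ∀ μ}` and `b` satisfies the inf-sup condition with constant
`β > 0`, then for every bounded linear functional `f` the saddle point problem
`a(u,q) + b(q,λ) = f(q) ∀q`, `b(u,μ) = 0 ∀μ` has a unique solution `(u, λ)`. -/
theorem babuska_brezzi_finite_multiplier
    {V : Type*} [NormedAddCommGroup V] [InnerProductSpace ℝ V] [CompleteSpace V]
    (m : ℕ)
    (a : V →L[ℝ] V →L[ℝ] ℝ)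
    (b : V →L[ℝ] EuclideanSpace ℝ (Fin m) →L[ℝ] ℝ)
    (α β : ℝ) (hα : 0 < α) (hβ : 0 < β)
    (hcoercive : ∀ v : V, (∀ μ : EuclideanSpace ℝ (Fin m), b v μ = 0) →
      α * ‖v‖ ^ 2 ≤ a v v)
    (hinfsup : ∀ μ : EuclideanSpace ℝ (Fin m),
      ∃ v : V, v ≠ 0 ∧ β * ‖v‖ * ‖μ‖ ≤ b v μ) :
    ∀ f : V →L[ℝ] ℝ, ∃! ul : V × EuclideanSpace ℝ (Fin m),
      (∀ q : V, a ul.1 q + b q ul.2 = f q) ∧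
      (∀ μ : EuclideanSpace ℝ (Fin m), b ul.1 μ = 0) := by
  intro f
  -- Riesz representative of b(·, μ)
  set R : EuclideanSpace ℝ (Fin m) →ₗ[ℝ] V :=
    { toFun := fun μ => (InnerProductSpace.toDual ℝ V).symm (b.flip μ)
      map_add' := by intro x y; simp
      map_smul' := by intro c x; simp } with hR
  have hRinner : ∀ (μ : EuclideanSpace ℝ (Fin m)) (v : V), (inner ℝ (R μ) (v) : ℝ) = b v μ := by
    intro μ v
    simp [hR, InnerProductSpace.toDual_symm_apply]
  set K : Submodule ℝ V := (LinearMap.range R)ᗮ with hKdef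
  have hKmem : ∀ v : V, v ∈ K ↔ ∀ μ, b v μ = 0 := by
    intro v
    constructor
    · intro hv μ
      have h0 := (Submodule.mem_orthogonal' _ _).mp hv (R μ) ⟨μ, rfl⟩
      rw [← hRinner μ v, real_inner_comm]
      exact h0
    · intro hv
      rw [Submodule.mem_orthogonal']
      rintro u ⟨μ, rfl⟩
      rw [real_inner_comm, hRinner]
      exact hv μ
  haveI : CompleteSpace K := (Submodule.isClosed_orthogonal _).completeSpace_coe
  set S : K →L[ℝ] V := K.subtypeL with hS
  set aK : K →L[ℝ] K →L[ℝ] ℝ := ((a.comp S).flip.comp S).flip with haK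
  have haKapp : ∀ u q : K, aK u q = a (u : V) (q : V) := fun u q => rfl
  have hcoer : IsCoercive aK := by
    refine ⟨α, hα, fun u => ?_⟩
    have := hcoercive (u : V) ((hKmem _).mp u.2)
    rw [haKapp]
    calc α * ‖u‖ * ‖u‖ = α * ‖(u : V)‖ ^ 2 := by
          rw [Submodule.norm_coe]; ring
      _ ≤ a (u : V) (u : V) := this
  set u₀ : K := hcoer.continuousLinearEquivOfBilin.symm
      ((InnerProductSpace.toDual ℝ K).symm (f.comp S)) with hu₀
  have hu₀eq : ∀ q : K, a (u₀ : V) (q : V) = f (q : V) := by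
    intro q
    have h1 : (inner ℝ (hcoer.continuousLinearEquivOfBilin u₀) (q) : ℝ) = aK u₀ q :=
      hcoer.continuousLinearEquivOfBilin_apply u₀ q
    rw [hu₀, ContinuousLinearEquiv.apply_symm_apply,
      InnerProductSpace.toDual_symm_apply] at h1
    rw [haKapp] at h1
    exact h1.symm
  set u : V := (u₀ : V) with hu
  have hbu : ∀ μ, b u μ = 0 := (hKmem _).mp u₀.2
  -- the functional f - a u vanishes on K; its Riesz rep lies in Kᗮ = range R
  set g : V →L[ℝ] ℝ := f - a u with hg
  set z : V := (InnerProductSpace.toDual ℝ V).symm g with hz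
  have hzmem : z ∈ Kᗮ := by
    rw [Submodule.mem_orthogonal']
    intro q hq
    rw [hz, InnerProductSpace.toDual_symm_apply, hg]
    have := hu₀eq ⟨q, hq⟩
    simp only [ContinuousLinearMap.sub_apply]
    simp only at this
    rw [← this]; ring
  haveI : FiniteDimensional ℝ (LinearMap.range R) := inferInstance
  have hKo : Kᗮ = LinearMap.range R := by
    rw [hKdef, Submodule.orthogonal_orthogonal_eq_closure]
    exact (LinearMap.range R).closed_of_finiteDimensional.submodule_topologicalClosure_eq
  rw [hKo] at hzmem
  obtain ⟨lam, hlam⟩ := hzmem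
  have hmain : ∀ q : V, a u q + b q lam = f q := by
    intro q
    have : b q lam = f q - a u q := by
      rw [← hRinner, hlam, hz, InnerProductSpace.toDual_symm_apply, hg]
      simp
    rw [this]; ring
  refine ⟨(u, lam), ⟨hmain, hbu⟩, ?_⟩
  rintro ⟨u', lam'⟩ ⟨hmain', hbu'⟩
  have hd : u' - u ∈ K := by
    rw [hKmem]
    intro μ
    simp [hbu μ, hbu' μ]
  have hdz : u' - u = 0 := by
    have h1 : a (u' - u) (u' - u) = 0 := by
      have hq : ∀ μ, b (u' - u) μ = 0 := (hKmem _).mp hd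
      have e1 := hmain' (u' - u)
      have e2 := hmain (u' - u)
      have e3 := hq lam'
      have e4 := hq lam
      simp only [map_sub, ContinuousLinearMap.sub_apply] at e1 e2 e3 e4 ⊢
      linarith
    have h2 := hcoercive (u' - u) ((hKmem _).mp hd)
    rw [h1] at h2
    have h3 : ‖u' - u‖ ^ 2 ≤ 0 := by nlinarith
    have h4 : ‖u' - u‖ ^ 2 = 0 := le_antisymm h3 (by positivity)
    exact norm_eq_zero.mp (pow_eq_zero_iff two_ne_zero |>.mp h4)
  have huu : u' = u := sub_eq_zero.mp hdz
  have hll : lam' = lam := by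
    have hbq : ∀ q : V, b q (lam' - lam) = 0 := by
      intro q
      have e1 := hmain' q
      have e2 := hmain q
      rw [huu] at e1
      have : b q lam' = b q lam := by linarith
      simp [map_sub, this]
    obtain ⟨v, hv0, hv⟩ := hinfsup (lam' - lam)
    rw [hbq v] at hv
    have hvpos : 0 < ‖v‖ := norm_pos_iff.mpr hv0
    have hle : ‖lam' - lam‖ ≤ 0 := by
      by_contra h
      push_neg at h
      nlinarith [mul_pos (mul_pos hβ hvpos) h]
    exact sub_eq_zero.mp (norm_le_zero_iff.mp hle)
  simp [huu, hll]

end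
end

section
/- Let E = γ([0,1]) be a smooth arc with bijective parametrization γ of length h = |E|, and let p ≥ 1. Given v ∈ H^s(E) with 1 ≤ s ≤ p+2, let w ∈ P_{p+1}(E) be the polynomial (in the parametrization) interpolating v at the two endpoints and matching the moments ⟨w, μ⟩_E = ⟨v, μ⟩_E for all μ ∈ P_{p−1}(E). Then ‖v − w‖_{L²(E)} + h‖∂_t(v − w)‖_{L²(E)} ≲ h^s ‖v‖_{H^s(E)}, with a constant independent of h and v. -/
open MeasureTheory intervalIntegral

noncomputable section

open scoped ENNReal NNReal

-- Cauchy-Schwarz for interval integrals of continuous functions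
lemma cs_int (f g : ℝ → ℝ) (hf : Continuous f) (hg : Continuous g) (a b : ℝ) (hab : a ≤ b) :
    (∫ x in a..b, f x * g x) ^ 2 ≤ (∫ x in a..b, f x ^ 2) * (∫ x in a..b, g x ^ 2) := by
  set I := ∫ x in a..b, f x * g x with hI
  set K := ∫ x in a..b, f x ^ 2 with hK
  set J := ∫ x in a..b, g x ^ 2 with hJ
  have hJ0 : 0 ≤ J := intervalIntegral.integral_nonneg hab (fun x _ => sq_nonneg _)
  have hK0 : 0 ≤ K := intervalIntegral.integral_nonneg hab (fun x _ => sq_nonneg _)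
  have key : ∀ t : ℝ, 0 ≤ K - 2 * t * I + t ^ 2 * J := by
    intro t
    have h1 : (0:ℝ) ≤ ∫ x in a..b, (f x - t * g x) ^ 2 :=
      intervalIntegral.integral_nonneg hab (fun x _ => sq_nonneg _)
    have h2 : (∫ x in a..b, (f x - t * g x) ^ 2) = K - 2 * t * I + t ^ 2 * J := by
      have e : ∀ x, (f x - t * g x) ^ 2
          = f x ^ 2 - (2 * t) * (f x * g x) + t ^ 2 * g x ^ 2 := by intro x; ring
      simp_rw [e]
      rw [intervalIntegral.integral_add, intervalIntegral.integral_sub,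
        intervalIntegral.integral_const_mul, intervalIntegral.integral_const_mul]
      · exact (hf.pow 2).intervalIntegrable a b
      · exact (continuous_const.mul (hf.mul hg)).intervalIntegrable a b
      · exact ((hf.pow 2).sub (continuous_const.mul (hf.mul hg))).intervalIntegrable a b
      · exact (continuous_const.mul (hg.pow 2)).intervalIntegrable a b
    linarith [h1, h2.symm.le, h2.le]
  rcases eq_or_lt_of_le hJ0 with h0 | hpos
  · have hI0 : I = 0 := by
      by_contra hne
      have := key ((K + 1) / (2 * I))
      rw [← h0] at this
      have h2I : 2 * ((K + 1) / (2 * I)) * I = K + 1 := by field_simp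
      nlinarith
    rw [hI0, ← h0]; ring_nf; positivity
  · have h := key (I / J)
    have h2 : 2 * (I / J) * I = 2 * (I ^ 2 / J) := by field_simp
    have h3 : (I / J) ^ 2 * J = I ^ 2 / J := by field_simp
    rw [h2, h3] at h
    have h4 : I ^ 2 / J ≤ K := by linarith
    calc I ^ 2 = (I ^ 2 / J) * J := by field_simp
    _ ≤ K * J := mul_le_mul_of_nonneg_right h4 hJ0

-- Minkowski
lemma mink_int (f g : ℝ → ℝ) (hf : Continuous f) (hg : Continuous g) (a b : ℝ) (hab : a ≤ b) :
    Real.sqrt (∫ x in a..b, (f x + g x) ^ 2) ≤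
      Real.sqrt (∫ x in a..b, f x ^ 2) + Real.sqrt (∫ x in a..b, g x ^ 2) := by
  set I := ∫ x in a..b, f x * g x
  set K := ∫ x in a..b, f x ^ 2 with hK
  set J := ∫ x in a..b, g x ^ 2 with hJ
  have hJ0 : 0 ≤ J := intervalIntegral.integral_nonneg hab (fun x _ => sq_nonneg _)
  have hK0 : 0 ≤ K := intervalIntegral.integral_nonneg hab (fun x _ => sq_nonneg _)
  have hcs : I ≤ Real.sqrt K * Real.sqrt J := by
    have h := cs_int f g hf hg a b hab
    have : I ≤ |I| := le_abs_self _
    have habs : |I| = Real.sqrt (I ^ 2) := by rw [Real.sqrt_sq_eq_abs]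
    calc I ≤ Real.sqrt (I ^ 2) := by rw [← habs]; exact le_abs_self _
    _ ≤ Real.sqrt (K * J) := Real.sqrt_le_sqrt h
    _ = Real.sqrt K * Real.sqrt J := Real.sqrt_mul hK0 _
  have hexp : (∫ x in a..b, (f x + g x) ^ 2) = K + 2 * I + J := by
    have e : ∀ x, (f x + g x) ^ 2 = f x ^ 2 + 2 * (f x * g x) + g x ^ 2 := fun x => by ring
    simp_rw [e]
    rw [intervalIntegral.integral_add, intervalIntegral.integral_add,
      intervalIntegral.integral_const_mul]
    · exact (hf.pow 2).intervalIntegrable a b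
    · exact (continuous_const.mul (hf.mul hg)).intervalIntegrable a b
    · exact ((hf.pow 2).add (continuous_const.mul (hf.mul hg))).intervalIntegrable a b
    · exact (hg.pow 2).intervalIntegrable a b
  rw [hexp]
  have h1 : K + 2 * I + J ≤ (Real.sqrt K + Real.sqrt J) ^ 2 := by
    have e1 : Real.sqrt K ^ 2 = K := Real.sq_sqrt hK0
    have e2 : Real.sqrt J ^ 2 = J := Real.sq_sqrt hJ0
    nlinarith [hcs]
  calc Real.sqrt (K + 2 * I + J) ≤ Real.sqrt ((Real.sqrt K + Real.sqrt J) ^ 2) :=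
        Real.sqrt_le_sqrt h1
  _ = Real.sqrt K + Real.sqrt J := Real.sqrt_sq (by positivity)

-- sup bound for integral of square
lemma int_sq_le (f : ℝ → ℝ) (hf : Continuous f) (a b M : ℝ) (hab : a ≤ b)
    (hM : ∀ x ∈ Set.Icc a b, |f x| ≤ M) :
    (∫ x in a..b, f x ^ 2) ≤ (b - a) * M ^ 2 := by
  have : (∫ x in a..b, f x ^ 2) ≤ ∫ _x in a..b, M ^ 2 := by
    apply intervalIntegral.integral_mono_on hab ((hf.pow 2).intervalIntegrable a b)
      (intervalIntegrable_const)
    intro x hx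
    have := hM x hx
    calc f x ^ 2 = |f x| ^ 2 := (sq_abs _).symm
    _ ≤ M ^ 2 := by nlinarith [abs_nonneg (f x)]
  simpa [mul_comm] using this

-- L1 bound via L2
lemma int_abs_le (f : ℝ → ℝ) (hf : Continuous f) (a b : ℝ) (hab : a ≤ b) :
    (∫ x in a..b, |f x|) ≤ Real.sqrt (b - a) * Real.sqrt (∫ x in a..b, f x ^ 2) := by
  have h := cs_int (fun x => |f x|) (fun _ => 1) hf.abs continuous_const a b hab
  simp only [mul_one, one_pow] at h
  have e : ∀ x, |f x| ^ 2 = f x ^ 2 := fun x => sq_abs _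
  simp_rw [e] at h
  rw [intervalIntegral.integral_const] at h
  simp only [smul_eq_mul, mul_one] at h
  have h0 : 0 ≤ ∫ x in a..b, |f x| :=
    intervalIntegral.integral_nonneg hab (fun x _ => abs_nonneg _)
  have := Real.sqrt_le_sqrt h
  rw [Real.sqrt_sq h0, Real.sqrt_mul
    (intervalIntegral.integral_nonneg hab (fun x _ => sq_nonneg _))] at this
  linarith [this, mul_comm (Real.sqrt (∫ x in a..b, f x ^ 2)) (Real.sqrt (b - a))]

lemma taylor_step (v : ℝ → ℝ) (m : ℕ) (hv : ContDiff ℝ ((m+2:ℕ):ℕ∞) v) (x : ℝ) :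
    (∫ t in (0:ℝ)..x, (x - t) ^ (m+1) / (m+1).factorial * iteratedDeriv (m+2) v t)
    = (∫ t in (0:ℝ)..x, (x - t) ^ m / m.factorial * iteratedDeriv (m+1) v t)
      - x ^ (m+1) / (m+1).factorial * iteratedDeriv (m+1) v 0 := by
  have hc1 : Continuous (iteratedDeriv (m+1) v) := hv.continuous_iteratedDeriv (m+1)
    (by exact_mod_cast Nat.le_succ _)
  have hc2 : Continuous (iteratedDeriv (m+2) v) := hv.continuous_iteratedDeriv (m+2)
    (by exact_mod_cast le_refl _)
  have hdiff : ∀ t : ℝ, HasDerivAt (iteratedDeriv (m+1) v) (iteratedDeriv (m+2) v t) t := by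
    intro t
    have h1 : DifferentiableAt ℝ (iteratedDeriv (m+1) v) t :=
      (hv.differentiable_iteratedDeriv (m+1) (by exact_mod_cast Nat.lt_succ_self _)) t
    have := h1.hasDerivAt
    rwa [show deriv (iteratedDeriv (m+1) v) t = iteratedDeriv (m+2) v t from by
      simp [iteratedDeriv_succ]] at this
  set ψ : ℝ → ℝ := fun t => (x - t) ^ (m+1) / (m+1).factorial * iteratedDeriv (m+1) v t with hψ
  set ψ' : ℝ → ℝ := fun t =>
    -((x - t) ^ m / m.factorial * iteratedDeriv (m+1) v t)
    + (x - t) ^ (m+1) / (m+1).factorial * iteratedDeriv (m+2) v t with hψ'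
  have hder : ∀ t : ℝ, HasDerivAt ψ (ψ' t) t := by
    intro t
    have hpow : HasDerivAt (fun t : ℝ => (x - t) ^ (m+1))
        (((m+1 : ℕ) : ℝ) * (x - t) ^ m * (-1)) t := by
      have hbase : HasDerivAt (fun t : ℝ => x - t) (-1) t := by
        simpa using (hasDerivAt_id t).const_sub x
      simpa using hbase.fun_pow (m+1)
    have h1 := (hpow.div_const ((m+1).factorial : ℝ)).fun_mul (hdiff t)
    refine h1.congr_deriv ?_
    have hfac : ((m+1).factorial : ℝ) = ((m+1 : ℕ) : ℝ) * (m.factorial : ℝ) := by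
      rw [Nat.factorial_succ]; push_cast; ring
    have hm1 : ((m+1 : ℕ) : ℝ) ≠ 0 := by positivity
    have hmf : (m.factorial : ℝ) ≠ 0 := by positivity
    simp only [hψ']
    rw [hfac]; field_simp
  have hint : IntervalIntegrable ψ' volume 0 x := by
    apply Continuous.intervalIntegrable
    apply Continuous.add
    · exact (((continuous_const.sub continuous_id).pow m).div_const _ |>.mul hc1).neg
    · exact (((continuous_const.sub continuous_id).pow (m+1)).div_const _).mul hc2
  have hftc := intervalIntegral.integral_eq_sub_of_hasDerivAt (fun t _ => hder t) hint
  have hψx : ψ x = 0 := by simp [hψ]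
  have hψ0 : ψ 0 = x ^ (m+1) / (m+1).factorial * iteratedDeriv (m+1) v 0 := by simp [hψ]
  rw [hψx, hψ0] at hftc
  have hsplit : (∫ t in (0:ℝ)..x, ψ' t)
      = -(∫ t in (0:ℝ)..x, (x - t) ^ m / m.factorial * iteratedDeriv (m+1) v t)
        + ∫ t in (0:ℝ)..x, (x - t) ^ (m+1) / (m+1).factorial * iteratedDeriv (m+2) v t := by
    simp only [hψ']
    rw [intervalIntegral.integral_add, intervalIntegral.integral_neg]
    · exact ((((continuous_const.sub continuous_id).pow m).div_const _).mul hc1).neg.intervalIntegrable _ _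
    · exact ((((continuous_const.sub continuous_id).pow (m+1)).div_const _).mul hc2).intervalIntegrable _ _
  rw [hsplit] at hftc
  linarith [hftc]

lemma taylor_int (v : ℝ → ℝ) (m : ℕ) (hv : ContDiff ℝ ((m+1:ℕ):ℕ∞) v) (x : ℝ) :
    v x - ∑ k ∈ Finset.range (m+1), iteratedDeriv k v 0 * x ^ k / k.factorial
    = ∫ t in (0:ℝ)..x, (x - t) ^ m / m.factorial * iteratedDeriv (m+1) v t := by
  induction m with
  | zero =>
    have hdv : ∀ t : ℝ, HasDerivAt v (iteratedDeriv 1 v t) t := by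
      intro t
      have h1 : DifferentiableAt ℝ v t := (hv.differentiable (by simp)) t
      have := h1.hasDerivAt
      rwa [show deriv v t = iteratedDeriv 1 v t from by rw [iteratedDeriv_one]] at this
    have hint : IntervalIntegrable (iteratedDeriv 1 v) volume 0 x :=
      (hv.continuous_iteratedDeriv 1 (by exact_mod_cast le_refl _)).intervalIntegrable _ _
    have := intervalIntegral.integral_eq_sub_of_hasDerivAt (fun t _ => hdv t) hint
    simp only [Finset.sum_range_one, iteratedDeriv_zero, pow_zero, Nat.factorial_zero,
      Nat.cast_one, one_div, inv_one, one_mul, mul_one]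
    rw [show (0+1) = 1 from rfl, this, Finset.sum_range_one]
    simp
  | succ m ih =>
    have hv' : ContDiff ℝ ((m+1:ℕ):ℕ∞) v := hv.of_le (by exact_mod_cast Nat.le_succ _)
    rw [Finset.sum_range_succ, taylor_step v m (by exact_mod_cast hv) x, ← ih hv']
    ring

open Polynomial in
lemma poly_uni (p : ℕ) (hp : 1 ≤ p) (f : Polynomial ℝ) (hdeg : f.natDegree ≤ p + 1)
    (h0 : f.eval 0 = 0) (h1 : f.eval 1 = 0)
    (hm : ∀ j < p, (∫ y in (0:ℝ)..1, f.eval y * y ^ j) = 0) : f = 0 := by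
  by_contra hf
  -- factor out X
  obtain ⟨f₁, hf₁⟩ : X ∣ f := X_dvd_iff.mpr (by rwa [coeff_zero_eq_eval_zero])
  have hf₁1 : f₁.eval 1 = 0 := by
    have := h1; rw [hf₁] at this; simpa using this
  obtain ⟨g, hg⟩ : (X - C 1) ∣ f₁ := dvd_iff_isRoot.mpr hf₁1
  have hfact : f = X * (X - C 1) * g := by rw [hf₁, hg]; ring
  have hgne : g ≠ 0 := by rintro rfl; simp [hfact] at hf
  -- degree bound
  have hXX : (X * (X - C 1) : Polynomial ℝ).natDegree = 2 := by
    compute_degree!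
  have hdg : g.natDegree < p := by
    have hne : (X * (X - C 1) : Polynomial ℝ) ≠ 0 := by
      intro h; rw [h] at hXX; simp at hXX
    have := natDegree_mul hne hgne
    rw [← hfact, hXX] at this
    omega
  -- the moment against g vanishes
  have hmg : (∫ y in (0:ℝ)..1, f.eval y * g.eval y) = 0 := by
    have hev : ∀ y : ℝ, f.eval y * g.eval y
        = ∑ j ∈ Finset.range p, g.coeff j * (f.eval y * y ^ j) := by
      intro y
      rw [eval_eq_sum_range' hdg y, Finset.mul_sum]
      exact Finset.sum_congr rfl fun j _ => by ring
    simp_rw [hev]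
    rw [intervalIntegral.integral_finset_sum]
    · refine Finset.sum_eq_zero fun j hj => ?_
      rw [intervalIntegral.integral_const_mul, hm j (Finset.mem_range.mp hj), mul_zero]
    · intro j _
      exact (continuous_const.mul ((f.continuous_aeval.mul (continuous_pow j)))).intervalIntegrable _ _
  -- rewrite as nonneg integrand
  have hev2 : ∀ y : ℝ, -(f.eval y * g.eval y) = y * (1 - y) * g.eval y ^ 2 := by
    intro y; rw [hfact]; simp [eval_mul, eval_sub]; ring
  have hpos : 0 < ∫ y in (0:ℝ)..1, -(f.eval y * g.eval y) := by
    have hcont : Continuous fun y : ℝ => -(f.eval y * g.eval y) :=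
      (f.continuous_aeval.mul g.continuous_aeval).neg
    rw [intervalIntegral.integral_pos_iff_support_of_nonneg_ae']
    · refine ⟨one_pos, ?_⟩
      have hsub : Set.Ioo (0:ℝ) 1 \ {y | g.IsRoot y} ⊆
          Function.support (fun y : ℝ => -(f.eval y * g.eval y)) ∩ Set.Ioc 0 1 := by
        rintro y ⟨hy, hroot⟩
        refine ⟨?_, Set.Ioo_subset_Ioc_self hy⟩
        simp only [Function.mem_support, hev2]
        have hg2 : g.eval y ≠ 0 := hroot
        have : 0 < y * (1 - y) * g.eval y ^ 2 := by
          have := hy.1; have := hy.2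
          have : 0 < y * (1 - y) := by nlinarith
          positivity
        exact this.ne'
      calc (0:ℝ≥0∞) < volume (Set.Ioo (0:ℝ) 1 \ {y | g.IsRoot y}) := by
            rw [measure_diff_null ((Polynomial.finite_setOf_isRoot hgne).measure_zero _)]
            simp
      _ ≤ _ := measure_mono hsub
    · rw [Set.uIoc_of_le (by norm_num : (0:ℝ) ≤ 1)]
      refine MeasureTheory.ae_restrict_of_forall_mem measurableSet_Ioc fun y hy => ?_
      show (0:ℝ) ≤ -(f.eval y * g.eval y)
      rw [hev2 y]
      have h01 : 0 < y := hy.1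
      have h02 : y ≤ 1 := hy.2
      have : (0:ℝ) ≤ y * (1 - y) := by nlinarith
      positivity
    · exact hcont.intervalIntegrable _ _
  rw [intervalIntegral.integral_neg, hmg, neg_zero] at hpos
  exact lt_irrefl 0 hpos

-- evaluation of coefficient vectors
def evc {n : ℕ} (c : Fin n → ℝ) (y : ℝ) : ℝ := ∑ i, c i * y ^ (i : ℕ)

def evd {n : ℕ} (c : Fin n → ℝ) (y : ℝ) : ℝ := ∑ i, c i * ((i : ℕ) : ℝ) * y ^ ((i : ℕ) - 1)

lemma evc_continuous {n : ℕ} (c : Fin n → ℝ) : Continuous (evc c) := by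
  unfold evc
  exact continuous_finset_sum _ fun i _ => continuous_const.mul (continuous_pow _)

lemma evd_continuous {n : ℕ} (c : Fin n → ℝ) : Continuous (evd c) := by
  unfold evd
  exact continuous_finset_sum _ fun i _ =>
    (continuous_const.mul continuous_const).mul (continuous_pow _)

lemma evc_hasDerivAt {n : ℕ} (c : Fin n → ℝ) (y : ℝ) :
    HasDerivAt (evc c) (evd c y) y := by
  unfold evc evd
  refine HasDerivAt.fun_sum fun i _ => ?_
  have : HasDerivAt (fun y : ℝ => c i * y ^ (i : ℕ)) (c i * (((i : ℕ) : ℝ) * y ^ ((i : ℕ) - 1))) y :=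
    (hasDerivAt_pow (i : ℕ) y).const_mul (c i)
  exact this.congr_deriv (by ring)

lemma evc_bound {n : ℕ} (c : Fin n → ℝ) (y : ℝ) (hy : y ∈ Set.Icc (0:ℝ) 1) :
    |evc c y| ≤ (n : ℝ) * ‖c‖ := by
  unfold evc
  calc |∑ i, c i * y ^ (i:ℕ)| ≤ ∑ i, |c i * y ^ (i:ℕ)| := Finset.abs_sum_le_sum_abs _ _
  _ ≤ ∑ _i : Fin n, ‖c‖ := by
      refine Finset.sum_le_sum fun i _ => ?_
      rw [abs_mul]
      have h1 : |c i| ≤ ‖c‖ := by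
        have := norm_le_pi_norm c i
        simpa using this
      have h2 : |y ^ (i:ℕ)| ≤ 1 := by
        rw [abs_pow]
        exact pow_le_one₀ (abs_nonneg _) (abs_le.mpr ⟨by linarith [hy.1], hy.2⟩)
      calc |c i| * |y ^ (i:ℕ)| ≤ |c i| * 1 := by
            exact mul_le_mul_of_nonneg_left h2 (abs_nonneg _)
      _ = |c i| := mul_one _
      _ ≤ ‖c‖ := h1
  _ = (n : ℝ) * ‖c‖ := by simp [Finset.sum_const, Finset.card_univ]

lemma evd_bound {n : ℕ} (c : Fin n → ℝ) (y : ℝ) (hy : y ∈ Set.Icc (0:ℝ) 1) :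
    |evd c y| ≤ (n : ℝ) * (n : ℝ) * ‖c‖ := by
  unfold evd
  calc |∑ i, c i * ((i:ℕ):ℝ) * y ^ ((i:ℕ)-1)| ≤ ∑ i, |c i * ((i:ℕ):ℝ) * y ^ ((i:ℕ)-1)| :=
        Finset.abs_sum_le_sum_abs _ _
  _ ≤ ∑ _i : Fin n, (n:ℝ) * ‖c‖ := by
      refine Finset.sum_le_sum fun i _ => ?_
      rw [abs_mul, abs_mul]
      have h1 : |c i| ≤ ‖c‖ := by simpa using norm_le_pi_norm c i
      have h2 : |y ^ ((i:ℕ)-1)| ≤ 1 := by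
        rw [abs_pow]
        exact pow_le_one₀ (abs_nonneg _) (abs_le.mpr ⟨by linarith [hy.1], hy.2⟩)
      have h3 : |((i:ℕ):ℝ)| ≤ (n:ℝ) := by
        rw [abs_of_nonneg (by positivity)]
        exact_mod_cast (i.2.le)
      calc |c i| * |((i:ℕ):ℝ)| * |y ^ ((i:ℕ)-1)| ≤ |c i| * (n:ℝ) * 1 := by
            apply mul_le_mul (mul_le_mul_of_nonneg_left h3 (abs_nonneg _)) h2 (abs_nonneg _)
            positivity
      _ = (n:ℝ) * |c i| := by ring
      _ ≤ (n:ℝ) * ‖c‖ := mul_le_mul_of_nonneg_left h1 (by positivity)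
  _ = (n : ℝ) * (n:ℝ) * ‖c‖ := by
      rw [Finset.sum_const, Finset.card_univ]
      simp; ring

-- the data map
noncomputable def Dfun (p : ℕ) (c : Fin (p+2) → ℝ) : Fin (p+2) → ℝ := fun k =>
  if (k : ℕ) = 0 then evc c 0
  else if (k : ℕ) = 1 then evc c 1
  else ∫ y in (0:ℝ)..1, evc c y * y ^ ((k : ℕ) - 2)

lemma evc_add {n : ℕ} (c d : Fin n → ℝ) (y : ℝ) : evc (c + d) y = evc c y + evc d y := by
  unfold evc; rw [← Finset.sum_add_distrib]; exact Finset.sum_congr rfl fun i _ => by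
    simp [add_mul]

lemma evc_smul {n : ℕ} (a : ℝ) (c : Fin n → ℝ) (y : ℝ) : evc (a • c) y = a * evc c y := by
  unfold evc; rw [Finset.mul_sum]; exact Finset.sum_congr rfl fun i _ => by
    simp [mul_assoc]

noncomputable def Dmap (p : ℕ) : (Fin (p+2) → ℝ) →ₗ[ℝ] (Fin (p+2) → ℝ) where
  toFun := Dfun p
  map_add' c d := by
    funext k
    unfold Dfun
    by_cases h0 : (k:ℕ) = 0
    · simp only [Pi.add_apply]; rw [if_pos h0, if_pos h0, if_pos h0, evc_add]
    by_cases h1 : (k:ℕ) = 1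
    · simp only [Pi.add_apply]; rw [if_neg h0, if_neg h0, if_neg h0, if_pos h1, if_pos h1, if_pos h1, evc_add]
    · simp only [h0, h1, if_false, Pi.add_apply]
      rw [← intervalIntegral.integral_add
        (((evc_continuous c).fun_mul (continuous_pow _)).intervalIntegrable _ _)
        (((evc_continuous d).fun_mul (continuous_pow _)).intervalIntegrable _ _)]
      congr 1; funext y; rw [evc_add]; ring
  map_smul' a c := by
    funext k
    unfold Dfun
    by_cases h0 : (k:ℕ) = 0
    · simp only [Pi.smul_apply, smul_eq_mul, RingHom.id_apply]; rw [if_pos h0, if_pos h0, evc_smul]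
    by_cases h1 : (k:ℕ) = 1
    · simp only [Pi.smul_apply, smul_eq_mul, RingHom.id_apply]; rw [if_neg h0, if_neg h0, if_pos h1, if_pos h1, evc_smul]
    · simp only [h0, h1, if_false, Pi.smul_apply, RingHom.id_apply, smul_eq_mul]
      rw [← intervalIntegral.integral_const_mul]
      congr 1; funext y; rw [evc_smul]; ring

-- associated polynomial
open Polynomial in
noncomputable def Pc {n : ℕ} (c : Fin n → ℝ) : Polynomial ℝ := ∑ i : Fin n, C (c i) * X ^ (i : ℕ)

open Polynomial in
lemma Pc_eval {n : ℕ} (c : Fin n → ℝ) (y : ℝ) : (Pc c).eval y = evc c y := by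
  unfold Pc evc
  rw [eval_finset_sum]
  exact Finset.sum_congr rfl fun i _ => by simp

open Polynomial in
lemma Pc_natDegree {n : ℕ} (hn : 1 ≤ n) (c : Fin n → ℝ) : (Pc c).natDegree ≤ n - 1 := by
  unfold Pc
  refine Polynomial.natDegree_sum_le_of_forall_le _ _ fun i _ => ?_
  exact le_trans (natDegree_C_mul_le _ _) (by simpa [natDegree_X_pow] using Nat.le_sub_one_of_lt i.2)

open Polynomial in
lemma Pc_coeff {n : ℕ} (c : Fin n → ℝ) (j : Fin n) : (Pc c).coeff (j : ℕ) = c j := by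
  unfold Pc
  rw [finset_sum_coeff]
  rw [Finset.sum_eq_single j]
  · simp
  · intro i _ hij
    rw [coeff_C_mul, coeff_X_pow, if_neg (by simpa [Fin.val_eq_val, eq_comm] using (hij))]
    simp
  · simp

lemma Dmap_inj (p : ℕ) (hp : 1 ≤ p) : Function.Injective (Dmap p) := by
  rw [injective_iff_map_eq_zero]
  intro c hc
  have hf : Pc c = 0 := by
    apply poly_uni p hp
    · have := Pc_natDegree (n := p+2) (by omega) c
      omega
    · rw [Pc_eval]
      have := congrFun hc ⟨0, by omega⟩
      simpa [Dfun, Dmap] using this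
    · rw [Pc_eval]
      have := congrFun hc ⟨1, by omega⟩
      simpa [Dfun, Dmap] using this
    · intro j hj
      have := congrFun hc ⟨j + 2, by omega⟩
      simp only [Dmap, Dfun, LinearMap.coe_mk, AddHom.coe_mk] at this
      simp_rw [Pc_eval]
      simpa using this
  funext i
  have := Pc_coeff c i
  rw [hf] at this
  simpa using this.symm

lemma inv_bound (p : ℕ) (hp : 1 ≤ p) :
    ∃ C : ℝ, 0 < C ∧ ∀ c : Fin (p+2) → ℝ, ‖c‖ ≤ C * ‖Dmap p c‖ := by
  have hinj := Dmap_inj p hp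
  have hsurj : Function.Surjective (Dmap p) :=
    (LinearMap.injective_iff_surjective).mp hinj
  let e : (Fin (p+2) → ℝ) ≃ₗ[ℝ] (Fin (p+2) → ℝ) := LinearEquiv.ofBijective _ ⟨hinj, hsurj⟩
  let S := LinearMap.toContinuousLinearMap (e.symm : (Fin (p+2) → ℝ) →ₗ[ℝ] (Fin (p+2) → ℝ))
  refine ⟨‖S‖ + 1, by positivity, fun c => ?_⟩
  have h1 : e.symm (Dmap p c) = c := e.symm_apply_apply c
  calc ‖c‖ = ‖S (Dmap p c)‖ := by
        rw [show S (Dmap p c) = e.symm (Dmap p c) from rfl, h1]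
  _ ≤ ‖S‖ * ‖Dmap p c‖ := S.le_opNorm _
  _ ≤ (‖S‖ + 1) * ‖Dmap p c‖ := by
      apply mul_le_mul_of_nonneg_right (by linarith) (norm_nonneg _)

lemma rem_bound (f : ℝ → ℝ) (hf : Continuous f) (m : ℕ) (h x : ℝ) (hx : x ∈ Set.Icc 0 h) :
    |∫ t in (0:ℝ)..x, (x - t) ^ m / m.factorial * f t|
      ≤ h ^ m * (Real.sqrt h * Real.sqrt (∫ t in (0:ℝ)..h, f t ^ 2)) := by
  obtain ⟨hx0, hxh⟩ := hx
  have hK : Continuous fun t => (x - t) ^ m / m.factorial * f t :=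
    (((continuous_const.sub continuous_id).pow m).div_const _).mul hf
  have h1 : |∫ t in (0:ℝ)..x, (x - t) ^ m / m.factorial * f t|
      ≤ ∫ t in (0:ℝ)..x, |(x - t) ^ m / m.factorial * f t| :=
    intervalIntegral.abs_integral_le_integral_abs hx0
  have h2 : (∫ t in (0:ℝ)..x, |(x - t) ^ m / m.factorial * f t|)
      ≤ ∫ t in (0:ℝ)..x, h ^ m * |f t| := by
    apply intervalIntegral.integral_mono_on hx0 (hK.abs.intervalIntegrable _ _)
      ((continuous_const.mul hf.abs).intervalIntegrable _ _)
    intro t ht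
    rw [abs_mul]
    have hxt : 0 ≤ x - t := by linarith [ht.2]
    have hxt2 : x - t ≤ h := by linarith [ht.1]
    have hKb : |(x - t) ^ m / m.factorial| ≤ h ^ m := by
      rw [abs_div, abs_pow, abs_of_nonneg hxt]
      have hfa : (1:ℝ) ≤ |(m.factorial : ℝ)| := by
        rw [abs_of_nonneg (by positivity)]
        exact_mod_cast m.factorial_pos
      calc (x - t) ^ m / |(m.factorial : ℝ)| ≤ (x - t) ^ m / 1 :=
            div_le_div_of_nonneg_left (by positivity) one_pos hfa
      _ = (x - t) ^ m := div_one _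
      _ ≤ h ^ m := pow_le_pow_left₀ hxt hxt2 m
    exact mul_le_mul_of_nonneg_right hKb (abs_nonneg _)
  have h3 : (∫ t in (0:ℝ)..x, h ^ m * |f t|) = h ^ m * ∫ t in (0:ℝ)..x, |f t| :=
    intervalIntegral.integral_const_mul _ _
  have h4 : (∫ t in (0:ℝ)..x, |f t|) ≤ ∫ t in (0:ℝ)..h, |f t| := by
    apply intervalIntegral.integral_mono_interval le_rfl hx0 hxh
    · exact Filter.Eventually.of_forall fun t => abs_nonneg _
    · exact hf.abs.intervalIntegrable _ _
  have h5 := int_abs_le f hf 0 h (by linarith)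
  have hh : (0:ℝ) ≤ h ^ m := by
    have : (0:ℝ) ≤ h := by linarith
    positivity
  calc |∫ t in (0:ℝ)..x, (x - t) ^ m / m.factorial * f t|
      ≤ ∫ t in (0:ℝ)..x, h ^ m * |f t| := h1.trans h2
  _ = h ^ m * ∫ t in (0:ℝ)..x, |f t| := h3
  _ ≤ h ^ m * ∫ t in (0:ℝ)..h, |f t| := mul_le_mul_of_nonneg_left h4 hh
  _ ≤ h ^ m * (Real.sqrt (h - 0) * Real.sqrt (∫ t in (0:ℝ)..h, f t ^ 2)) :=
      mul_le_mul_of_nonneg_left (by simpa using h5) hh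
  _ = _ := by rw [sub_zero]

open Polynomial in
noncomputable def Tp (v : ℝ → ℝ) (m : ℕ) : Polynomial ℝ :=
  ∑ k ∈ Finset.range (m+1), C (iteratedDeriv k v 0 / k.factorial) * X ^ k

open Polynomial in
lemma Tp_eval (v : ℝ → ℝ) (m : ℕ) (x : ℝ) :
    (Tp v m).eval x = ∑ k ∈ Finset.range (m+1), iteratedDeriv k v 0 * x ^ k / k.factorial := by
  unfold Tp
  rw [eval_finset_sum]
  exact Finset.sum_congr rfl fun k _ => by simp; ring

open Polynomial in
lemma Tp_natDegree (v : ℝ → ℝ) (m : ℕ) : (Tp v m).natDegree ≤ m := by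
  unfold Tp
  refine Polynomial.natDegree_sum_le_of_forall_le _ _ fun k hk => ?_
  refine le_trans (natDegree_C_mul_le _ _) ?_
  simpa [natDegree_X_pow] using Nat.lt_succ_iff.mp (Finset.mem_range.mp hk)

open Polynomial in
lemma Tp_deriv_eval (v : ℝ → ℝ) (m : ℕ) (x : ℝ) :
    (Tp v m).derivative.eval x
      = ∑ k ∈ Finset.range m, iteratedDeriv (k+1) v 0 * x ^ k / k.factorial := by
  unfold Tp
  rw [derivative_sum, eval_finset_sum]
  have hterm : ∀ k, (derivative (C (iteratedDeriv k v 0 / k.factorial) * X ^ k)).eval x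
      = iteratedDeriv k v 0 / k.factorial * k * x ^ (k - 1) := by
    intro k
    rw [derivative_C_mul_X_pow]
    simp
  simp_rw [hterm]
  rw [Finset.sum_range_succ']
  simp only [Nat.cast_zero, mul_zero, zero_mul, add_zero]
  refine Finset.sum_congr rfl fun j _ => ?_
  have hfac : ((j+1).factorial : ℝ) = ((j:ℝ) + 1) * (j.factorial : ℝ) := by
    rw [Nat.factorial_succ]; push_cast; ring
  have h1 : (j.factorial : ℝ) ≠ 0 := by positivity
  have h2 : ((j:ℝ) + 1) ≠ 0 := by positivity
  rw [hfac]
  push_cast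
  field_simp


open Polynomial

/-- One-dimensional interpolation estimate on an arc of length `h` (identified,
via its arc-length parametrization, with the interval `(0,h)`), for `p ≥ 1`:
if `w` is the polynomial of degree `≤ p+1` interpolating `v ∈ Hˢ(0,h)`,
`1 ≤ s ≤ p+2`, at the two endpoints and matching the moments against all
polynomials of degree `≤ p−1`, then
`‖v−w‖_{L²} + h ‖(v−w)'‖_{L²} ≤ C hˢ ‖v‖_{Hˢ}`, with `C` independent of `h, v`. -/
theorem interpolation_estimate_moments (p : ℕ) (hp : 1 ≤ p) :
    ∃ C > 0, ∀ h : ℝ, 0 < h → ∀ s : ℕ, 1 ≤ s → s ≤ p + 2 →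
      ∀ v w : ℝ → ℝ, ContDiff ℝ (s : ℕ∞) v →
      (∃ q : Polynomial ℝ, q.natDegree ≤ p + 1 ∧ ∀ x, w x = q.eval x) →
      w 0 = v 0 → w h = v h →
      (∀ μ : Polynomial ℝ, μ.natDegree ≤ p - 1 →
        ∫ x in (0:ℝ)..h, (v x - w x) * μ.eval x = 0) →
      Real.sqrt (∫ x in (0:ℝ)..h, (v x - w x) ^ 2) +
          h * Real.sqrt (∫ x in (0:ℝ)..h, (deriv v x - deriv w x) ^ 2) ≤
        C * h ^ s *
          Real.sqrt (∑ k ∈ Finset.range (s + 1),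
            ∫ x in (0:ℝ)..h, (iteratedDeriv k v x) ^ 2) := by
  obtain ⟨C₁, hC₁pos, hC₁⟩ := inv_bound p hp
  set N : ℝ := (p : ℝ) + 2 with hN
  have hNpos : 0 < N := by positivity
  refine ⟨2 + N * C₁ + N * N * C₁, by positivity, ?_⟩
  intro h hh s hs1 hs2 v w hv hwq hw0 hwh hmom
  obtain ⟨q_w, hqdeg, hqw⟩ := hwq
  have hwfun : w = fun x => q_w.eval x := funext hqw
  subst hwfun
  obtain ⟨m, rfl⟩ : ∃ m, s = m + 1 := ⟨s - 1, by omega⟩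
  have hne : h ≠ 0 := ne_of_gt hh
  have hvs : ContDiff ℝ ((m+1:ℕ):ℕ∞) v := hv
  have hds : Continuous (iteratedDeriv (m+1) v) :=
    hvs.continuous_iteratedDeriv (m+1) (by exact_mod_cast le_refl _)
  have hvc : Continuous v := hvs.continuous
  set A := Real.sqrt (∫ x in (0:ℝ)..h, (iteratedDeriv (m+1) v x) ^ 2) with hA
  have hA0 : 0 ≤ A := Real.sqrt_nonneg _
  set uu : ℝ → ℝ := fun x => v x - (Tp v m).eval x with huu
  have huuc : Continuous uu := hvc.sub (Tp v m).continuous_aeval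
  have htay : ∀ x, uu x
      = ∫ t in (0:ℝ)..x, (x - t) ^ m / m.factorial * iteratedDeriv (m+1) v t := by
    intro x
    rw [huu]
    simp only [Tp_eval]
    exact taylor_int v m hvs x
  have hupt : ∀ x ∈ Set.Icc (0:ℝ) h, |uu x| ≤ h ^ m * (Real.sqrt h * A) := by
    intro x hx
    rw [htay x]
    exact rem_bound _ hds m h x hx
  -- the polynomial difference
  set q_g : Polynomial ℝ := q_w - Tp v m with hqg
  have hgdeg : q_g.natDegree ≤ p + 1 := by
    refine le_trans (natDegree_sub_le _ _) ?_
    refine max_le hqdeg (le_trans (Tp_natDegree v m) ?_)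
    omega
  have hvw : ∀ x, v x - q_w.eval x = uu x - q_g.eval x := by
    intro x
    rw [huu, hqg, eval_sub]
    ring
  -- scaled coefficient vector
  set c : Fin (p+2) → ℝ := fun i => q_g.coeff i * h ^ (i:ℕ) with hc
  have hkey : ∀ y : ℝ, evc c y = q_g.eval (h * y) := by
    intro y
    rw [eval_eq_sum_range' (n := p + 2) (by omega) (h * y)]
    rw [show evc c y = ∑ i : Fin (p+2), q_g.coeff i * h ^ (i:ℕ) * y ^ (i:ℕ) from rfl]
    rw [Fin.sum_univ_eq_sum_range (fun i => q_g.coeff i * h ^ i * y ^ i)]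
    exact Finset.sum_congr rfl fun i _ => by rw [mul_pow]; ring
  have hkey2 : ∀ x : ℝ, evc c (x / h) = q_g.eval x := by
    intro x
    rw [hkey, mul_div_cancel₀ x hne]
  -- data bound
  set B := h ^ m * (Real.sqrt h * A) with hB
  have hB0 : 0 ≤ B := by positivity
  have hDb : ‖Dmap p c‖ ≤ B := by
    rw [pi_norm_le_iff_of_nonneg hB0]
    intro k
    rw [show Dmap p c k = Dfun p c k from rfl]
    unfold Dfun
    rw [Real.norm_eq_abs]
    have he0 : evc c 0 = uu 0 := by
      have h1 := hkey 0
      rw [mul_zero] at h1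
      rw [h1, hqg, eval_sub, huu]
      have hw0' : q_w.eval 0 = v 0 := hw0
      rw [hw0']
    have he1 : evc c 1 = uu h := by
      have h1 := hkey 1
      rw [mul_one] at h1
      rw [h1, hqg, eval_sub, huu]
      have hwh' : q_w.eval h = v h := hwh
      rw [hwh']
    by_cases hk0 : (k:ℕ) = 0
    · rw [if_pos hk0, he0]
      exact hupt 0 ⟨le_rfl, hh.le⟩
    by_cases hk1 : (k:ℕ) = 1
    · rw [if_neg hk0, if_pos hk1, he1]
      exact hupt h ⟨hh.le, le_rfl⟩
    rw [if_neg hk0, if_neg hk1]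
    set j := (k:ℕ) - 2 with hj
    have hjp : j ≤ p - 1 := by
      have := k.2
      omega
    -- substitution: reference moment = h⁻¹ * moment on (0,h)
    have hsub : (∫ y in (0:ℝ)..1, evc c y * y ^ j)
        = h⁻¹ * ∫ x in (0:ℝ)..h, q_g.eval x * (x / h) ^ j := by
      have hcomp := intervalIntegral.integral_comp_div (a := 0) (b := h)
        (f := fun y => evc c y * y ^ j) hne
      have hlhs : (∫ x in (0:ℝ)..h, evc c (x / h) * (x / h) ^ j)
          = ∫ x in (0:ℝ)..h, q_g.eval x * (x / h) ^ j := by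
        refine intervalIntegral.integral_congr fun x _ => ?_
        rw [hkey2 x]
      rw [hlhs] at hcomp
      rw [show (0:ℝ) / h = 0 by simp, div_self hne] at hcomp
      rw [hcomp, smul_eq_mul, ← mul_assoc, inv_mul_cancel₀ hne, one_mul]
    -- moment condition transfers
    have hmom2 : (∫ x in (0:ℝ)..h, q_g.eval x * (x / h) ^ j)
        = ∫ x in (0:ℝ)..h, uu x * (x / h) ^ j := by
      have hμdeg : ((C h⁻¹ * X : Polynomial ℝ) ^ j).natDegree ≤ p - 1 := by
        refine le_trans natDegree_pow_le ?_
        have : (C h⁻¹ * X : Polynomial ℝ).natDegree ≤ 1 :=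
          le_trans (natDegree_C_mul_le _ _) (by simp)
        calc j * (C h⁻¹ * X : Polynomial ℝ).natDegree ≤ j * 1 :=
              Nat.mul_le_mul_left _ this
        _ = j := mul_one _
        _ ≤ p - 1 := hjp
      have hμeval : ∀ x : ℝ, ((C h⁻¹ * X : Polynomial ℝ) ^ j).eval x = (x / h) ^ j := by
        intro x
        rw [eval_pow, eval_mul, eval_C, eval_X]
        congr 1
        field_simp
      have hm0 := hmom ((C h⁻¹ * X : Polynomial ℝ) ^ j) hμdeg
      have hm1 : (∫ x in (0:ℝ)..h, (uu x - q_g.eval x) * (x / h) ^ j) = 0 := by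
        have heq : (∫ x in (0:ℝ)..h, (uu x - q_g.eval x) * (x / h) ^ j)
            = ∫ x in (0:ℝ)..h, (v x - q_w.eval x) * ((C h⁻¹ * X : Polynomial ℝ) ^ j).eval x := by
          refine intervalIntegral.integral_congr fun x _ => ?_
          rw [hμeval x, ← hvw x]
        rw [heq]
        exact hm0
      have hint1 : IntervalIntegrable (fun x => uu x * (x / h) ^ j) volume 0 h :=
        (huuc.mul ((continuous_id.div_const h).pow j)).intervalIntegrable _ _
      have hint2 : IntervalIntegrable (fun x => q_g.eval x * (x / h) ^ j) volume 0 h :=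
        (q_g.continuous_aeval.mul ((continuous_id.div_const h).pow j)).intervalIntegrable _ _
      have hsplit : (∫ x in (0:ℝ)..h, (uu x - q_g.eval x) * (x / h) ^ j)
          = (∫ x in (0:ℝ)..h, uu x * (x / h) ^ j)
            - ∫ x in (0:ℝ)..h, q_g.eval x * (x / h) ^ j := by
        rw [← intervalIntegral.integral_sub hint1 hint2]
        refine intervalIntegral.integral_congr fun x _ => ?_
        ring
      rw [hsplit] at hm1
      linarith
    -- bound
    have hbd : |∫ x in (0:ℝ)..h, uu x * (x / h) ^ j| ≤ h * B := by
      have h1 : |∫ x in (0:ℝ)..h, uu x * (x / h) ^ j|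
          ≤ ∫ x in (0:ℝ)..h, |uu x * (x / h) ^ j| :=
        intervalIntegral.abs_integral_le_integral_abs hh.le
      have h2 : (∫ x in (0:ℝ)..h, |uu x * (x / h) ^ j|) ≤ ∫ _x in (0:ℝ)..h, B := by
        apply intervalIntegral.integral_mono_on hh.le
          ((huuc.fun_mul ((continuous_id.div_const h).fun_pow j)).abs.intervalIntegrable _ _)
          intervalIntegrable_const
        intro x hx
        rw [abs_mul]
        have hu := hupt x hx
        have hxh : |(x / h) ^ j| ≤ 1 := by
          rw [abs_pow]
          refine pow_le_one₀ (abs_nonneg _) ?_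
          rw [abs_div, abs_of_nonneg hx.1, abs_of_nonneg hh.le]
          exact div_le_one_of_le₀ hx.2 hh.le
        calc |uu x| * |(x / h) ^ j| ≤ B * 1 :=
              mul_le_mul hu hxh (abs_nonneg _) hB0
        _ = B := mul_one _
      rw [intervalIntegral.integral_const, smul_eq_mul, sub_zero] at h2
      linarith
    rw [hsub, hmom2, abs_mul, abs_of_nonneg (by positivity : (0:ℝ) ≤ h⁻¹)]
    calc h⁻¹ * |∫ x in (0:ℝ)..h, uu x * (x / h) ^ j| ≤ h⁻¹ * (h * B) :=
          mul_le_mul_of_nonneg_left hbd (by positivity)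
    _ = B := by field_simp
  -- norm of coefficient vector
  have hcb : ‖c‖ ≤ C₁ * B := (hC₁ c).trans (mul_le_mul_of_nonneg_left hDb hC₁pos.le)
  have hc0 : 0 ≤ ‖c‖ := norm_nonneg _
  -- L² bound for q_g
  have hNn : ((p+2:ℕ):ℝ) = N := by rw [hN]; push_cast; ring
  have hE1 : (∫ x in (0:ℝ)..h, (q_g.eval x) ^ 2) = h * ∫ y in (0:ℝ)..1, (evc c y) ^ 2 := by
    have hcomp := intervalIntegral.integral_comp_div (a := 0) (b := h)
      (f := fun y => (evc c y) ^ 2) hne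
    have hlhs : (∫ x in (0:ℝ)..h, (evc c (x / h)) ^ 2)
        = ∫ x in (0:ℝ)..h, (q_g.eval x) ^ 2 := by
      refine intervalIntegral.integral_congr fun x _ => ?_
      rw [hkey2 x]
    rw [show (0:ℝ) / h = 0 by simp, div_self hne] at hcomp
    rw [← hlhs, hcomp, smul_eq_mul]
  have hE2 : Real.sqrt (∫ x in (0:ℝ)..h, (q_g.eval x) ^ 2) ≤ Real.sqrt h * (N * ‖c‖) := by
    rw [hE1]
    have hb : (∫ y in (0:ℝ)..1, (evc c y) ^ 2) ≤ (1 - 0) * (N * ‖c‖) ^ 2 := by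
      apply int_sq_le _ (evc_continuous c) _ _ _ (by norm_num)
      intro y hy
      calc |evc c y| ≤ ((p+2:ℕ):ℝ) * ‖c‖ := evc_bound c y hy
      _ = N * ‖c‖ := by rw [hNn]
    rw [sub_zero, one_mul] at hb
    calc Real.sqrt (h * ∫ y in (0:ℝ)..1, (evc c y) ^ 2)
        ≤ Real.sqrt (h * (N * ‖c‖) ^ 2) :=
          Real.sqrt_le_sqrt (mul_le_mul_of_nonneg_left hb hh.le)
    _ = Real.sqrt h * (N * ‖c‖) := by
        rw [Real.sqrt_mul hh.le, Real.sqrt_sq (by positivity)]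
  -- derivative of q_g via scaling
  have hqd : ∀ x : ℝ, q_g.derivative.eval x = evd c (x / h) * (1 / h) := by
    intro x
    have hinner : HasDerivAt (fun x : ℝ => x / h) (1 / h) x := by
      simpa using (hasDerivAt_id x).div_const h
    have houter := evc_hasDerivAt c (x / h)
    have hcomp := HasDerivAt.comp x houter hinner
    have hfun : (evc c ∘ fun x : ℝ => x / h) = fun x => q_g.eval x := by
      funext z
      simp only [Function.comp_apply]
      exact hkey2 z
    rw [hfun] at hcomp
    exact (Polynomial.hasDerivAt q_g x).unique hcomp
  have hE3 : (∫ x in (0:ℝ)..h, (q_g.derivative.eval x) ^ 2)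
      = h⁻¹ * ∫ y in (0:ℝ)..1, (evd c y) ^ 2 := by
    have hcomp := intervalIntegral.integral_comp_div (a := 0) (b := h)
      (f := fun y => (evd c y) ^ 2) hne
    rw [show (0:ℝ) / h = 0 by simp, div_self hne] at hcomp
    have hlhs : (∫ x in (0:ℝ)..h, (q_g.derivative.eval x) ^ 2)
        = ∫ x in (0:ℝ)..h, (1 / h) ^ 2 * (fun y => (evd c y) ^ 2) (x / h) := by
      refine intervalIntegral.integral_congr fun x _ => ?_
      rw [hqd x]
      ring
    rw [hlhs, intervalIntegral.integral_const_mul, hcomp, smul_eq_mul]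
    rw [one_div, ← mul_assoc]
    congr 1
    field_simp
  have hE4 : Real.sqrt (∫ x in (0:ℝ)..h, (q_g.derivative.eval x) ^ 2)
      ≤ Real.sqrt h⁻¹ * (N * N * ‖c‖) := by
    rw [hE3]
    have hb : (∫ y in (0:ℝ)..1, (evd c y) ^ 2) ≤ (1 - 0) * (N * N * ‖c‖) ^ 2 := by
      apply int_sq_le _ (evd_continuous c) _ _ _ (by norm_num)
      intro y hy
      calc |evd c y| ≤ ((p+2:ℕ):ℝ) * ((p+2:ℕ):ℝ) * ‖c‖ := evd_bound c y hy
      _ = N * N * ‖c‖ := by rw [hNn]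
    rw [sub_zero, one_mul] at hb
    calc Real.sqrt (h⁻¹ * ∫ y in (0:ℝ)..1, (evd c y) ^ 2)
        ≤ Real.sqrt (h⁻¹ * (N * N * ‖c‖) ^ 2) :=
          Real.sqrt_le_sqrt (mul_le_mul_of_nonneg_left hb (by positivity))
    _ = Real.sqrt h⁻¹ * (N * N * ‖c‖) := by
        rw [Real.sqrt_mul (by positivity), Real.sqrt_sq (by positivity)]
  -- L² bound for uu
  have hE5 : Real.sqrt (∫ x in (0:ℝ)..h, (uu x) ^ 2) ≤ Real.sqrt h * B := by
    have hb := int_sq_le uu huuc 0 h B hh.le hupt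
    rw [sub_zero] at hb
    calc Real.sqrt (∫ x in (0:ℝ)..h, (uu x) ^ 2) ≤ Real.sqrt (h * B ^ 2) :=
          Real.sqrt_le_sqrt hb
    _ = Real.sqrt h * B := by rw [Real.sqrt_mul hh.le, Real.sqrt_sq hB0]
  -- the derivative remainder
  set duu : ℝ → ℝ := fun x => deriv v x - (Tp v m).derivative.eval x with hduu
  have hdvc : Continuous (deriv v) := by
    have := hvs.continuous_iteratedDeriv 1 (by exact_mod_cast Nat.le_add_left 1 m)
    rwa [iteratedDeriv_one] at this
  have hduuc : Continuous duu := hdvc.sub (Tp v m).derivative.continuous_aeval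
  have hE6 : Real.sqrt (∫ x in (0:ℝ)..h, (duu x) ^ 2) ≤ h ^ m * A := by
    obtain rfl | ⟨m', rfl⟩ : m = 0 ∨ ∃ m', m = m' + 1 := by
      rcases m with _ | k
      exacts [Or.inl rfl, Or.inr ⟨k, rfl⟩]
    ·
      have hd : ∀ x, duu x = iteratedDeriv 1 v x := by
        intro x
        rw [hduu]
        simp only [Tp_deriv_eval, Finset.range_zero, Finset.sum_empty, sub_zero,
          iteratedDeriv_one]
      have : (∫ x in (0:ℝ)..h, (duu x) ^ 2)
          = ∫ x in (0:ℝ)..h, (iteratedDeriv (0+1) v x) ^ 2 := by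
        refine intervalIntegral.integral_congr fun x _ => ?_
        rw [hd x]
      rw [this, pow_zero, one_mul]
    · have hdv : ContDiff ℝ ((m'+1:ℕ):ℕ∞) (deriv v) := by
        have h2 : ContDiff ℝ (((m'+1:ℕ):ℕ∞) + 1) v := by exact_mod_cast hvs
        exact (contDiff_succ_iff_deriv.mp h2).2.2
      have hde : iteratedDeriv (m'+1) (deriv v) = iteratedDeriv (m'+1+1) v :=
        (iteratedDeriv_succ').symm
      have hdpt : ∀ x ∈ Set.Icc (0:ℝ) h, |duu x| ≤ h ^ m' * (Real.sqrt h * A) := by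
        intro x hx
        have htay2 := taylor_int (deriv v) m' hdv x
        have hsum : ∀ k, iteratedDeriv k (deriv v) 0 = iteratedDeriv (k+1) v 0 := by
          intro k
          rw [← iteratedDeriv_succ']
        have hlhs : duu x = deriv v x
            - ∑ k ∈ Finset.range (m'+1), iteratedDeriv k (deriv v) 0 * x ^ k / k.factorial := by
          rw [hduu]
          simp only [Tp_deriv_eval]
          congr 1
          exact Finset.sum_congr rfl fun k _ => by rw [hsum k]
        rw [hlhs, htay2]
        have := rem_bound (iteratedDeriv (m'+1) (deriv v))
          (by rw [hde]; exact hds) m' h x hx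
        convert this using 3
        rw [hA, hde]
      have hb := int_sq_le duu hduuc 0 h _ hh.le hdpt
      rw [sub_zero] at hb
      calc Real.sqrt (∫ x in (0:ℝ)..h, (duu x) ^ 2)
          ≤ Real.sqrt (h * (h ^ m' * (Real.sqrt h * A)) ^ 2) := Real.sqrt_le_sqrt hb
      _ = Real.sqrt h * (h ^ m' * (Real.sqrt h * A)) := by
          rw [Real.sqrt_mul hh.le, Real.sqrt_sq (by positivity)]
      _ = h ^ (m'+1) * A := by
          rw [show Real.sqrt h * (h ^ m' * (Real.sqrt h * A))
            = (Real.sqrt h * Real.sqrt h) * h ^ m' * A by ring,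
            Real.mul_self_sqrt hh.le]
          ring
  -- Minkowski on value part
  beta_reduce
  have hS1 : Real.sqrt (∫ x in (0:ℝ)..h, (v x - q_w.eval x) ^ 2)
      ≤ Real.sqrt h * B + Real.sqrt h * (N * ‖c‖) := by
    have hstep : (∫ x in (0:ℝ)..h, (v x - q_w.eval x) ^ 2)
        = ∫ x in (0:ℝ)..h, (uu x + -(q_g.eval x)) ^ 2 := by
      refine intervalIntegral.integral_congr fun x _ => ?_
      rw [show uu x + -(q_g.eval x) = uu x - q_g.eval x by ring, ← hvw x]
    rw [hstep]
    have hm := mink_int uu (fun x => -(q_g.eval x)) huuc q_g.continuous_aeval.neg 0 h hh.le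
    have hneg : (∫ x in (0:ℝ)..h, (-(q_g.eval x)) ^ 2)
        = ∫ x in (0:ℝ)..h, (q_g.eval x) ^ 2 := by
      refine intervalIntegral.integral_congr fun x _ => ?_
      ring
    rw [hneg] at hm
    exact hm.trans (add_le_add hE5 hE2)
  have hS2 : Real.sqrt (∫ x in (0:ℝ)..h, (deriv v x - deriv (fun x => q_w.eval x) x) ^ 2)
      ≤ h ^ m * A + Real.sqrt h⁻¹ * (N * N * ‖c‖) := by
    have hstep : (∫ x in (0:ℝ)..h, (deriv v x - deriv (fun x => q_w.eval x) x) ^ 2)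
        = ∫ x in (0:ℝ)..h, (duu x + -(q_g.derivative.eval x)) ^ 2 := by
      refine intervalIntegral.integral_congr fun x _ => ?_
      rw [Polynomial.deriv, hduu, hqg, derivative_sub, eval_sub]
      ring_nf
    rw [hstep]
    have hm := mink_int duu (fun x => -(q_g.derivative.eval x)) hduuc
      q_g.derivative.continuous_aeval.neg 0 h hh.le
    have hneg : (∫ x in (0:ℝ)..h, (-(q_g.derivative.eval x)) ^ 2)
        = ∫ x in (0:ℝ)..h, (q_g.derivative.eval x) ^ 2 := by
      refine intervalIntegral.integral_congr fun x _ => ?_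
      ring
    rw [hneg] at hm
    exact hm.trans (add_le_add hE6 hE4)
  -- combine
  set R := Real.sqrt (∑ k ∈ Finset.range (m + 1 + 1),
    ∫ x in (0:ℝ)..h, (iteratedDeriv k v x) ^ 2) with hR
  have hAR : A ≤ R := by
    rw [hA, hR]
    apply Real.sqrt_le_sqrt
    apply Finset.single_le_sum (f := fun k => ∫ x in (0:ℝ)..h, (iteratedDeriv k v x) ^ 2)
      (fun k _ => intervalIntegral.integral_nonneg hh.le fun x _ => sq_nonneg _)
    exact Finset.self_mem_range_succ (m+1)
  have hR0 : 0 ≤ R := Real.sqrt_nonneg _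
  have hsB : Real.sqrt h * B = h ^ (m+1) * A := by
    rw [hB, show Real.sqrt h * (h ^ m * (Real.sqrt h * A))
      = (Real.sqrt h * Real.sqrt h) * h ^ m * A by ring, Real.mul_self_sqrt hh.le]
    ring
  have hsinv : h * Real.sqrt h⁻¹ = Real.sqrt h := by
    rw [Real.sqrt_inv]
    rw [show h = Real.sqrt h * Real.sqrt h from (Real.mul_self_sqrt hh.le).symm]
    field_simp
    rw [Real.sqrt_sq (Real.sqrt_nonneg h)]
  have hsqh : 0 < Real.sqrt h := Real.sqrt_pos.mpr hh
  have hcbB : ‖c‖ ≤ C₁ * (h ^ m * (Real.sqrt h * A)) := hcb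
  calc Real.sqrt (∫ x in (0:ℝ)..h, (v x - q_w.eval x) ^ 2)
        + h * Real.sqrt (∫ x in (0:ℝ)..h, (deriv v x - deriv (fun x => q_w.eval x) x) ^ 2)
      ≤ (Real.sqrt h * B + Real.sqrt h * (N * ‖c‖))
        + h * (h ^ m * A + Real.sqrt h⁻¹ * (N * N * ‖c‖)) := by
        refine add_le_add hS1 (mul_le_mul_of_nonneg_left hS2 hh.le)
  _ = h ^ (m+1) * A + Real.sqrt h * N * ‖c‖ + h ^ (m+1) * A
        + Real.sqrt h * (N * N) * ‖c‖ := by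
      rw [hsB]
      rw [show h * (h ^ m * A + Real.sqrt h⁻¹ * (N * N * ‖c‖))
        = h * h ^ m * A + (h * Real.sqrt h⁻¹) * (N * N) * ‖c‖ by ring, hsinv]
      ring
  _ ≤ h ^ (m+1) * A + Real.sqrt h * N * (C₁ * (h ^ m * (Real.sqrt h * A)))
        + h ^ (m+1) * A + Real.sqrt h * (N * N) * (C₁ * (h ^ m * (Real.sqrt h * A))) := by
      have h1 : 0 ≤ Real.sqrt h * N := by positivity
      have h2 : 0 ≤ Real.sqrt h * (N * N) := by positivity
      gcongr
  _ = (2 + N * C₁ + N * N * C₁) * h ^ (m+1) * A := by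
      rw [show Real.sqrt h * N * (C₁ * (h ^ m * (Real.sqrt h * A)))
        = N * C₁ * ((Real.sqrt h * Real.sqrt h) * h ^ m * A) by ring,
        show Real.sqrt h * (N * N) * (C₁ * (h ^ m * (Real.sqrt h * A)))
        = N * N * C₁ * ((Real.sqrt h * Real.sqrt h) * h ^ m * A) by ring,
        Real.mul_self_sqrt hh.le]
      ring
  _ ≤ (2 + N * C₁ + N * N * C₁) * h ^ (m+1) * R := by
      have : (0:ℝ) ≤ (2 + N * C₁ + N * N * C₁) * h ^ (m+1) := by positivity
      exact mul_le_mul_of_nonneg_left hAR this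

end
end

section
/- Consider the space Y_h = {(v₀, v_n) ∈ P_{p+2+δ_{p0}}(ℰ_h) × P_{p+1}(ℰ_h) : v₀ and (∂_t v₀, v_n)(t|n) are continuous on Γ}, where ℰ_h is a partition of a closed curve Γ into N = #ℰ_h arcs. Then dim Y_h = (2p + 2 + δ_{p0}) N. -/
open scoped RealInnerProductSpace

noncomputable section

open Polynomial in
/-- Decomposition of a vector in `ℝ²` along an orthonormal pair. -/
lemma onb_decomp_aux (t n : EuclideanSpace ℝ (Fin 2))
    (ht : ‖t‖ = 1) (hn : ‖n‖ = 1) (htn : ⟪t, n⟫ = 0) (v : EuclideanSpace ℝ (Fin 2)) :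
    v = ⟪v, t⟫ • t + ⟪v, n⟫ • n := by
  have htt : ⟪t, t⟫ = (1 : ℝ) := by
    rw [real_inner_self_eq_norm_mul_norm, ht]; ring
  have hnn : ⟪n, n⟫ = (1 : ℝ) := by
    rw [real_inner_self_eq_norm_mul_norm, hn]; ring
  have hnt : ⟪n, t⟫ = (0 : ℝ) := by rw [real_inner_comm]; exact htn
  have horth : Orthonormal ℝ ![t, n] := by
    rw [orthonormal_iff_ite]
    intro i j
    fin_cases i <;> fin_cases j <;> simp [htt, hnn, htn, hnt, ht, hn]
  have hcard : Fintype.card (Fin 2) = Module.finrank ℝ (EuclideanSpace ℝ (Fin 2)) := by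
    simp [finrank_euclideanSpace_fin]
  have hsp : Submodule.span ℝ (Set.range ![t, n]) = ⊤ := by
    have := (basisOfOrthonormalOfCardEqFinrank horth hcard).span_eq
    rwa [coe_basisOfOrthonormalOfCardEqFinrank] at this
  set u : EuclideanSpace ℝ (Fin 2) := v - (⟪v, t⟫ • t + ⟪v, n⟫ • n) with hu
  have hut : ⟪t, u⟫ = (0 : ℝ) := by
    simp only [hu, inner_sub_right, inner_add_right, real_inner_smul_right]
    rw [htt, htn, real_inner_comm t v]; ring
  have hun : ⟪n, u⟫ = (0 : ℝ) := by
    simp only [hu, inner_sub_right, inner_add_right, real_inner_smul_right]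
    rw [hnn, hnt, real_inner_comm n v]; ring
  have hall : ∀ w ∈ Submodule.span ℝ (Set.range ![t, n]), ⟪w, u⟫ = (0 : ℝ) := by
    intro w hw
    induction hw using Submodule.span_induction with
    | mem x hx =>
        obtain ⟨i, rfl⟩ := hx
        fin_cases i
        · exact hut
        · exact hun
    | zero => simp
    | add x y _ _ hx hy => rw [inner_add_left, hx, hy]; ring
    | smul c x _ hx => rw [real_inner_smul_left, hx]; ring
  have h0 : ⟪u, u⟫ = (0 : ℝ) := hall u (by rw [hsp]; trivial)
  have hu0 : u = 0 := by rwa [inner_self_eq_zero] at h0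
  exact sub_eq_zero.mp hu0

open Polynomial in
lemma hermite_exists_aux (d : ℕ) (hd : 3 ≤ d) (a b : ℝ) :
    ∃ q : Polynomial ℝ, q ∈ degreeLT ℝ (d + 1) ∧ q.eval 0 = a ∧ q.eval 1 = 0 ∧
      (derivative q).eval 0 = b ∧ (derivative q).eval 1 = 0 := by
  refine ⟨C (2 * a + b) * X ^ 3 + C (-3 * a - 2 * b) * X ^ 2 + C b * X + C a,
    ?_, by simp, by simp; ring, ?_, ?_⟩
  · rw [mem_degreeLT]
    have h1 : degree (C (2 * a + b) * X ^ 3 + C (-3 * a - 2 * b) * X ^ 2 + C b * X + C a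
        : Polynomial ℝ) ≤ 3 := by compute_degree
    exact lt_of_le_of_lt h1
      (by exact_mod_cast Nat.lt_of_lt_of_le (by norm_num) (Nat.succ_le_succ hd))
  · simp
  · simp; ring

open Polynomial in
lemma linear_exists_aux (d : ℕ) (hd : 1 ≤ d) (c : ℝ) :
    ∃ q : Polynomial ℝ, q ∈ degreeLT ℝ (d + 1) ∧ q.eval 0 = c ∧ q.eval 1 = 0 := by
  refine ⟨C c - C c * X, ?_, by simp, by simp⟩
  rw [mem_degreeLT]
  refine lt_of_le_of_lt (by compute_degree : degree (C c - C c * X : Polynomial ℝ) ≤ 1) ?_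
  exact_mod_cast Nat.lt_of_lt_of_le (by norm_num) (Nat.succ_le_succ hd)

open Polynomial in
/-- The linear map collecting the vertex matching conditions. -/
def psiMap (N : ℕ) [NeZero N] (t n : Fin N → Bool → EuclideanSpace ℝ (Fin 2))
    (ℓ : Fin N → ℝ) :
    (Fin N → Polynomial ℝ × Polynomial ℝ) →ₗ[ℝ]
      (Fin N → ℝ × EuclideanSpace ℝ (Fin 2)) where
  toFun P i :=
    (eval 1 (P i).1 - eval 0 (P (i + 1)).1,
     ((ℓ i)⁻¹ * eval 1 (derivative (P i).1)) • t i true + (eval 1 (P i).2) • n i true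
       - (((ℓ (i + 1))⁻¹ * eval 0 (derivative (P (i + 1)).1)) • t (i + 1) false
          + (eval 0 (P (i + 1)).2) • n (i + 1) false))
  map_add' P Q := by
    funext i
    refine Prod.ext ?_ ?_ <;>
      simp only [Pi.add_apply, Prod.fst_add, Prod.snd_add, derivative_add, eval_add,
        Prod.mk_add_mk]
    · ring
    · module
  map_smul' c P := by
    funext i
    refine Prod.ext ?_ ?_ <;>
      simp only [Pi.smul_apply, Prod.smul_fst, Prod.smul_snd, derivative_smul, eval_smul,
        smul_eq_mul, RingHom.id_apply, Prod.smul_mk]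
    · ring
    · module

/-- Dimension of the discrete Dirichlet trace space `Y_h` on a closed curve `Γ`
partitioned into `N` arcs.  Each arc `E_i` (of length `ℓ i`, identified with `[0,1]`
via its parametrization) carries a pair of polynomials: `v₀` of degree
`≤ p+2+δ_{p0}` and `v_n` of degree `≤ p+1`.  At each of the `N` vertices (between
arc `i`, endpoint `1`, and arc `i+1`, endpoint `0`), `v₀` is continuous and the
vector field `(∂_t v₀, v_n)(t|n) = (∂_t v₀) t + v_n n` is continuous, where
`t i b`, `n i b` are the orthonormal tangent/normal frames of arc `i` at its
endpoints (`b = false`: start, `b = true`: end) and `∂_t v₀ = ℓ⁻¹ v₀'` is the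
arc-length derivative.  Then `dim Y_h = (2p + 2 + δ_{p0}) N`. -/
theorem dim_discrete_dirichlet_trace_space (p N : ℕ) [NeZero N]
    (t n : Fin N → Bool → EuclideanSpace ℝ (Fin 2))
    (ℓ : Fin N → ℝ) (hℓ : ∀ i, 0 < ℓ i)
    (ht : ∀ i b, ‖t i b‖ = 1) (hn : ∀ i b, ‖n i b‖ = 1)
    (htn : ∀ i b, ⟪t i b, n i b⟫ = 0)
    (Yh : Submodule ℝ (Fin N → Polynomial ℝ × Polynomial ℝ))
    (hYh : ∀ P : Fin N → Polynomial ℝ × Polynomial ℝ, P ∈ Yh ↔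
      ((∀ i, (P i).1.natDegree ≤ p + 2 + (if p = 0 then 1 else 0)) ∧
       (∀ i, (P i).2.natDegree ≤ p + 1) ∧
       (∀ i, Polynomial.eval 1 (P i).1 = Polynomial.eval 0 (P (i + 1)).1) ∧
       (∀ i, ((ℓ i)⁻¹ * Polynomial.eval 1 (Polynomial.derivative (P i).1)) • t i true +
              (Polynomial.eval 1 (P i).2) • n i true =
            ((ℓ (i + 1))⁻¹ *
              Polynomial.eval 0 (Polynomial.derivative (P (i + 1)).1)) • t (i + 1) false +
              (Polynomial.eval 0 (P (i + 1)).2) • n (i + 1) false))) :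
    Module.finrank ℝ Yh = (2 * p + 2 + (if p = 0 then 1 else 0)) * N := by
  classical
  open Polynomial in
  have hd1 : 3 ≤ p + 2 + (if p = 0 then 1 else 0) := by split_ifs <;> omega
  set δ : ℕ := (if p = 0 then 1 else 0) with hδ
  set d₁ : ℕ := p + 2 + δ with hd₁
  set d₂ : ℕ := p + 1 with hd₂
  have hd2 : 1 ≤ d₂ := by omega
  let W := Fin N → (Polynomial.degreeLT ℝ (d₁ + 1) × Polynomial.degreeLT ℝ (d₂ + 1))
  let Φ : W →ₗ[ℝ] (Fin N → Polynomial ℝ × Polynomial ℝ) :=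
    { toFun := fun w i => (((w i).1 : Polynomial ℝ), ((w i).2 : Polynomial ℝ)),
      map_add' := fun w w' => rfl,
      map_smul' := fun c w => rfl }
  have hΦ : Function.Injective Φ := by
    intro w w' h
    funext i
    have h1 := congrFun h i
    rw [Prod.ext_iff] at h1
    exact Prod.ext (Subtype.ext h1.1) (Subtype.ext h1.2)
  let ψ := psiMap N t n ℓ
  have hdegiff : ∀ (q : Polynomial ℝ) (d : ℕ),
      q.natDegree ≤ d ↔ q ∈ Polynomial.degreeLT ℝ (d + 1) := by
    intro q d
    rw [Polynomial.degreeLT_succ_eq_degreeLE, Polynomial.mem_degreeLE,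
      Polynomial.natDegree_le_iff_degree_le]
  have hker : Yh = Submodule.map Φ (LinearMap.ker (ψ.comp Φ)) := by
    ext P
    rw [hYh, Submodule.mem_map]
    constructor
    · rintro ⟨h1, h2, h3, h4⟩
      refine ⟨fun i => (⟨(P i).1, (hdegiff _ _).mp (h1 i)⟩,
        ⟨(P i).2, (hdegiff _ _).mp (h2 i)⟩), ?_, ?_⟩
      · rw [LinearMap.mem_ker]
        funext i
        exact Prod.ext (sub_eq_zero.mpr (h3 i)) (sub_eq_zero.mpr (h4 i))
      · rfl
    · rintro ⟨w, hw, rfl⟩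
      rw [LinearMap.mem_ker] at hw
      refine ⟨fun i => (hdegiff _ _).mpr (w i).1.2, fun i => (hdegiff _ _).mpr (w i).2.2,
        fun i => ?_, fun i => ?_⟩
      · exact sub_eq_zero.mp (congrArg Prod.fst (congrFun hw i))
      · exact sub_eq_zero.mp (congrArg Prod.snd (congrFun hw i))
  haveI i1 : FiniteDimensional ℝ (Polynomial.degreeLT ℝ (d₁ + 1)) :=
    (Polynomial.degreeLTEquiv ℝ (d₁ + 1)).symm.finiteDimensional
  haveI i2 : FiniteDimensional ℝ (Polynomial.degreeLT ℝ (d₂ + 1)) :=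
    (Polynomial.degreeLTEquiv ℝ (d₂ + 1)).symm.finiteDimensional
  have hW : Module.finrank ℝ W = ((d₁ + 1) + (d₂ + 1)) * N := by
    rw [Module.finrank_pi_fintype]
    have hone : Module.finrank ℝ
        (Polynomial.degreeLT ℝ (d₁ + 1) × Polynomial.degreeLT ℝ (d₂ + 1)) =
        (d₁ + 1) + (d₂ + 1) := by
      rw [Module.finrank_prod, (Polynomial.degreeLTEquiv ℝ (d₁ + 1)).finrank_eq,
        (Polynomial.degreeLTEquiv ℝ (d₂ + 1)).finrank_eq, Module.finrank_fin_fun,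
        Module.finrank_fin_fun]
    rw [Finset.sum_const, Finset.card_univ, Fintype.card_fin, smul_eq_mul, hone,
      Nat.mul_comm]
  have hsurj : Function.Surjective (ψ.comp Φ) := by
    intro g
    choose q1 hq1mem hq1e0 hq1e1 hq1d0 hq1d1 using fun j : Fin N =>
      hermite_exists_aux d₁ hd1 (-(g (j - 1)).1) (ℓ j * ⟪-(g (j - 1)).2, t j false⟫)
    choose q2 hq2mem hq2e0 hq2e1 using fun j : Fin N =>
      linear_exists_aux d₂ hd2 ⟪-(g (j - 1)).2, n j false⟫
    refine ⟨fun j => (⟨q1 j, hq1mem j⟩, ⟨q2 j, hq2mem j⟩), ?_⟩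
    funext i
    have hidx : (i + 1 : Fin N) - 1 = i := add_sub_cancel_right i 1
    refine Prod.ext ?_ ?_
    · show Polynomial.eval 1 (q1 i) - Polynomial.eval 0 (q1 (i + 1)) = (g i).1
      rw [hq1e1, hq1e0, hidx]
      ring
    · show ((ℓ i)⁻¹ * Polynomial.eval 1 (Polynomial.derivative (q1 i))) • t i true
          + (Polynomial.eval 1 (q2 i)) • n i true
          - (((ℓ (i + 1))⁻¹ * Polynomial.eval 0 (Polynomial.derivative (q1 (i + 1)))) •
              t (i + 1) false
            + (Polynomial.eval 0 (q2 (i + 1))) • n (i + 1) false) = (g i).2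
      rw [hq1d1 i, hq2e1 i, hq1d0 (i + 1), hq2e0 (i + 1), hidx]
      rw [inv_mul_cancel_left₀ (ne_of_gt (hℓ (i + 1)))]
      rw [← onb_decomp_aux (t (i + 1) false) (n (i + 1) false) (ht _ _) (hn _ _) (htn _ _)
        (-(g i).2)]
      simp
  have hcod : Module.finrank ℝ (Fin N → ℝ × EuclideanSpace ℝ (Fin 2)) = 3 * N := by
    rw [Module.finrank_pi_fintype]
    have hone : Module.finrank ℝ (ℝ × EuclideanSpace ℝ (Fin 2)) = 3 := by
      rw [Module.finrank_prod, Module.finrank_self, finrank_euclideanSpace_fin]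
    rw [Finset.sum_const, Finset.card_univ, Fintype.card_fin, smul_eq_mul, hone,
      Nat.mul_comm]
  have hrn := LinearMap.finrank_range_add_finrank_ker (ψ.comp Φ)
  rw [LinearMap.range_eq_top.mpr hsurj, finrank_top, hcod, hW] at hrn
  have hYfr : Module.finrank ℝ Yh = Module.finrank ℝ (LinearMap.ker (ψ.comp Φ)) := by
    rw [hker]
    exact (Submodule.equivMapOfInjective Φ hΦ (LinearMap.ker (ψ.comp Φ))).finrank_eq.symm
  rw [hYfr]
  have hsum : d₁ + 1 + (d₂ + 1) = 2 * p + 2 + δ + 3 := by omega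
  rw [hsum, add_mul, add_comm ((2 * p + 2 + δ) * N) (3 * N)] at hrn
  exact Nat.add_left_cancel hrn

end
end

section
/- With Y_h as above, the degrees of freedom consisting of (i) the values v₀(z) and (∂_t v₀, v_n)(t|n)(z) at each vertex z (three scalars per vertex), (ii) the moments ⟨v_n, μ⟩_E for μ ∈ P_{p−1}(E) on each arc E (if p ≥ 1), and (iii) the moments ⟨v₀, μ⟩_E for μ ∈ P_{p−2}(E) on each arc E (if p ≥ 2), are unisolvent on Y_h: if all these functionals vanish for (v₀, v_n) ∈ Y_h then (v₀, v_n) = 0. -/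
open MeasureTheory intervalIntegral
open scoped RealInnerProductSpace

noncomputable section

private lemma ortho_coords {t n : EuclideanSpace ℝ (Fin 2)} (ht : ‖t‖ = 1) (hn : ‖n‖ = 1)
    (htn : ⟪t, n⟫ = 0) {a b : ℝ} (h : a • t + b • n = 0) : a = 0 ∧ b = 0 := by
  have h1 := congrArg (fun v => ⟪v, t⟫) h
  have h2 := congrArg (fun v => ⟪v, n⟫) h
  have hnt : ⟪n, t⟫ = 0 := by rw [real_inner_comm]; exact htn
  simp only [inner_add_left, real_inner_smul_left, inner_zero_left,
    real_inner_self_eq_norm_sq, ht, hn, htn, hnt] at h1 h2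
  constructor <;> nlinarith

private lemma sq_dvd_of_double_root (f : Polynomial ℝ) (a : ℝ)
    (h0 : f.eval a = 0) (h1 : (Polynomial.derivative f).eval a = 0) :
    (Polynomial.X - Polynomial.C a) ^ 2 ∣ f := by
  obtain ⟨q, hq⟩ := Polynomial.dvd_iff_isRoot.2 h0
  have hd : Polynomial.derivative f
      = q + (Polynomial.X - Polynomial.C a) * Polynomial.derivative q := by
    rw [hq, Polynomial.derivative_mul]
    simp
  have hqa : q.eval a = 0 := by
    have := congrArg (Polynomial.eval a) hd
    simpa [h1] using this.symm
  obtain ⟨r, hr⟩ := Polynomial.dvd_iff_isRoot.2 hqa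
  exact ⟨r, by rw [hq, hr]; ring⟩

private lemma poly_eq_zero_of_nonneg_integral_zero (h : Polynomial ℝ)
    (hpos : ∀ x ∈ Set.Ioc (0:ℝ) 1, 0 ≤ h.eval x)
    (hint : ∫ x in (0:ℝ)..1, h.eval x = 0) : h = 0 := by
  have hcont : Continuous fun x : ℝ => h.eval x := h.continuous
  rw [intervalIntegral.integral_of_le (by norm_num : (0:ℝ) ≤ 1)] at hint
  have hInt : IntegrableOn (fun x => h.eval x) (Set.Ioc (0:ℝ) 1) := hcont.integrableOn_Ioc
  have hnn : 0 ≤ᵐ[volume.restrict (Set.Ioc (0:ℝ) 1)] fun x => h.eval x :=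
    (ae_restrict_iff' measurableSet_Ioc).2 (Filter.Eventually.of_forall hpos)
  have hae : (fun x => h.eval x) =ᵐ[volume.restrict (Set.Ioc (0:ℝ) 1)] 0 :=
    (MeasureTheory.integral_eq_zero_iff_of_nonneg_ae hnn hInt).1 hint
  have hae' : ∀ᵐ x ∂(volume : Measure ℝ), x ∈ Set.Ioc (0:ℝ) 1 → h.eval x = 0 :=
    (ae_restrict_iff' measurableSet_Ioc).1 hae
  by_contra hne
  have hfin : Set.Finite {x : ℝ | h.IsRoot x} := Polynomial.finite_setOf_isRoot hne
  have hnull : (volume : Measure ℝ) {x : ℝ | ¬(x ∈ Set.Ioc (0:ℝ) 1 → h.eval x = 0)} = 0 :=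
    MeasureTheory.ae_iff.1 hae'
  have hsub : Set.Ioc (0:ℝ) 1 ⊆
      {x : ℝ | ¬(x ∈ Set.Ioc (0:ℝ) 1 → h.eval x = 0)} ∪ {x : ℝ | h.IsRoot x} := by
    intro x hx
    by_cases hhx : h.eval x = 0
    · exact Or.inr hhx
    · exact Or.inl (fun himp => hhx (himp hx))
  have hle := (measure_mono (μ := (volume : Measure ℝ)) hsub).trans (measure_union_le _ _)
  rw [hnull, hfin.measure_zero volume, Real.volume_Ioc] at hle
  norm_num at hle

/-- Generic unisolvence lemma: if `m ∣ v`, `m` monic with `ε * m ≥ 0` on `(0,1]`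
(`ε = ±1`), `v.natDegree ≤ m.natDegree + d`, and all moments of `v` against
polynomials of degree `≤ d` vanish, then `v = 0`. -/
private lemma poly_zero_of_dvd_moments (m v : Polynomial ℝ) (hm : m.Monic) (d : ℕ)
    (ε : ℝ) (hε : ε = 1 ∨ ε = -1)
    (hw : ∀ x ∈ Set.Ioc (0:ℝ) 1, 0 ≤ ε * m.eval x)
    (hdvd : m ∣ v) (hdeg : v.natDegree ≤ m.natDegree + d)
    (hmom : ∀ μ : Polynomial ℝ, μ.natDegree ≤ d →
      ∫ x in (0:ℝ)..1, Polynomial.eval x v * Polynomial.eval x μ = 0) : v = 0 := by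
  obtain ⟨g, hg⟩ := hdvd
  by_cases hg0 : g = 0
  · rw [hg, hg0, mul_zero]
  have hdg : g.natDegree ≤ d := by
    have := Polynomial.natDegree_mul (hm.ne_zero) hg0
    rw [hg] at hdeg
    omega
  have hmomg := hmom (Polynomial.C ε * g)
    (by simpa [Polynomial.natDegree_C_mul (by rcases hε with h | h <;> simp [h] : ε ≠ 0)]
      using hdg)
  set H : Polynomial ℝ := Polynomial.C ε * m * g ^ 2 with hH
  have hHint : ∫ x in (0:ℝ)..1, H.eval x = 0 := by
    calc ∫ x in (0:ℝ)..1, H.eval x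
        = ∫ x in (0:ℝ)..1,
            Polynomial.eval x v * Polynomial.eval x (Polynomial.C ε * g) := by
          apply intervalIntegral.integral_congr
          intro x _
          simp only [hH, hg, Polynomial.eval_mul, Polynomial.eval_C, Polynomial.eval_pow]
          ring
      _ = 0 := hmomg
  have hHpos : ∀ x ∈ Set.Ioc (0:ℝ) 1, 0 ≤ H.eval x := by
    intro x hx
    have := hw x hx
    simp only [hH, Polynomial.eval_mul, Polynomial.eval_C, Polynomial.eval_pow]
    positivity
  have hH0 := poly_eq_zero_of_nonneg_integral_zero H hHpos hHint
  have hε0 : (Polynomial.C ε : Polynomial ℝ) ≠ 0 := by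
    rcases hε with h | h <;> simp [h]
  have : g ^ 2 = 0 := by
    rcases mul_eq_zero.1 hH0 with h | h
    · exact absurd h (mul_ne_zero hε0 hm.ne_zero)
    · exact h
  exact absurd (pow_eq_zero_iff (n := 2) (by norm_num) |>.1 this) hg0

/-- Unisolvence of the degrees of freedom of the discrete Dirichlet trace space
`Y_h` on a closed curve partitioned into `N` arcs (same setting as for the
dimension count: each arc `E_i`, of length `ℓ i` and identified with `[0,1]`, carries a
pair `(v₀, v_n)` of polynomials of degree `≤ p+2+δ_{p0}` and `≤ p+1`, with continuity
of `v₀` and of `(∂_t v₀) t + v_n n` at the vertices; `t i b, n i b` orthonormal frames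
at the arc endpoints, `∂_t v₀ = ℓ⁻¹ v₀'`).  If for `(v₀, v_n) ∈ Y_h` all degrees of
freedom vanish — (i) the vertex values `v₀(z)` and the vertex vectors
`(∂_t v₀, v_n)(t|n)(z)`, (ii) the moments `⟨v_n, μ⟩_E` for `μ ∈ P_{p−1}(E)` (if `p ≥ 1`),
(iii) the moments `⟨v₀, μ⟩_E` for `μ ∈ P_{p−2}(E)` (if `p ≥ 2`) — then `(v₀, v_n) = 0`. -/
theorem unisolvence_discrete_dirichlet_trace_space (p N : ℕ) [NeZero N]
    (t n : Fin N → Bool → EuclideanSpace ℝ (Fin 2))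
    (ℓ : Fin N → ℝ) (hℓ : ∀ i, 0 < ℓ i)
    (ht : ∀ i b, ‖t i b‖ = 1) (hn : ∀ i b, ‖n i b‖ = 1)
    (htn : ∀ i b, ⟪t i b, n i b⟫ = 0)
    (P : Fin N → Polynomial ℝ × Polynomial ℝ)
    -- membership in Y_h:
    (hdeg0 : ∀ i, (P i).1.natDegree ≤ p + 2 + (if p = 0 then 1 else 0))
    (hdegn : ∀ i, (P i).2.natDegree ≤ p + 1)
    (hcont0 : ∀ i, Polynomial.eval 1 (P i).1 = Polynomial.eval 0 (P (i + 1)).1)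
    (hcontg : ∀ i,
      ((ℓ i)⁻¹ * Polynomial.eval 1 (Polynomial.derivative (P i).1)) • t i true +
        (Polynomial.eval 1 (P i).2) • n i true =
      ((ℓ (i + 1))⁻¹ *
        Polynomial.eval 0 (Polynomial.derivative (P (i + 1)).1)) • t (i + 1) false +
        (Polynomial.eval 0 (P (i + 1)).2) • n (i + 1) false)
    -- vanishing of the degrees of freedom:
    (hval : ∀ i, Polynomial.eval 0 (P i).1 = 0)
    (hgrad : ∀ i,
      ((ℓ i)⁻¹ * Polynomial.eval 0 (Polynomial.derivative (P i).1)) • t i false +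
        (Polynomial.eval 0 (P i).2) • n i false = 0)
    (hmomn : 1 ≤ p → ∀ i, ∀ μ : Polynomial ℝ, μ.natDegree ≤ p - 1 →
      ∫ x in (0:ℝ)..1, Polynomial.eval x (P i).2 * Polynomial.eval x μ = 0)
    (hmom0 : 2 ≤ p → ∀ i, ∀ μ : Polynomial ℝ, μ.natDegree ≤ p - 2 →
      ∫ x in (0:ℝ)..1, Polynomial.eval x (P i).1 * Polynomial.eval x μ = 0) :
    P = 0 := by
  -- Step 1: vertex data at parameter 0 of every arc.
  have h0 : ∀ i, Polynomial.eval 0 (Polynomial.derivative (P i).1) = 0 ∧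
      Polynomial.eval 0 (P i).2 = 0 := by
    intro i
    obtain ⟨ha, hb⟩ := ortho_coords (ht i false) (hn i false) (htn i false) (hgrad i)
    refine ⟨?_, hb⟩
    have hinv : (ℓ i)⁻¹ ≠ 0 := inv_ne_zero (hℓ i).ne'
    exact (mul_eq_zero.1 ha).resolve_left hinv
  -- Step 2: vertex data at parameter 1 of every arc.
  have h1 : ∀ i, Polynomial.eval 1 (Polynomial.derivative (P i).1) = 0 ∧
      Polynomial.eval 1 (P i).2 = 0 := by
    intro i
    have hrhs := hcontg i
    rw [(h0 (i + 1)).1, (h0 (i + 1)).2, mul_zero, zero_smul, zero_smul, add_zero] at hrhs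
    obtain ⟨ha, hb⟩ := ortho_coords (ht i true) (hn i true) (htn i true) hrhs
    refine ⟨?_, hb⟩
    have hinv : (ℓ i)⁻¹ ≠ 0 := inv_ne_zero (hℓ i).ne'
    exact (mul_eq_zero.1 ha).resolve_left hinv
  have h1v : ∀ i, Polynomial.eval 1 (P i).1 = 0 := fun i => by
    rw [hcont0 i]; exact hval (i + 1)
  -- the weight polynomials
  set m1 : Polynomial ℝ :=
    (Polynomial.X - Polynomial.C (0:ℝ)) * (Polynomial.X - Polynomial.C 1) with hm1
  set m2 : Polynomial ℝ :=
    (Polynomial.X - Polynomial.C (0:ℝ)) ^ 2 * (Polynomial.X - Polynomial.C 1) ^ 2 with hm2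
  have hm1m : m1.Monic := (Polynomial.monic_X_sub_C 0).mul (Polynomial.monic_X_sub_C 1)
  have hm2m : m2.Monic :=
    ((Polynomial.monic_X_sub_C 0).pow 2).mul ((Polynomial.monic_X_sub_C 1).pow 2)
  have hcop : IsCoprime (Polynomial.X - Polynomial.C (0:ℝ)) (Polynomial.X - Polynomial.C 1) :=
    ⟨1, -1, by ring_nf; simp⟩
  have hm1deg : m1.natDegree = 2 := by
    rw [hm1, ((Polynomial.monic_X_sub_C (0:ℝ))).natDegree_mul (Polynomial.monic_X_sub_C 1)]
    simp only [Polynomial.natDegree_X_sub_C]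
  have hm2deg : m2.natDegree = 4 := by
    rw [hm2, ((Polynomial.monic_X_sub_C (0:ℝ)).pow 2).natDegree_mul
      ((Polynomial.monic_X_sub_C 1).pow 2)]
    simp only [Polynomial.natDegree_pow, Polynomial.natDegree_X_sub_C]
  funext i
  have hdvd1 : m1 ∣ (P i).2 := by
    refine hcop.mul_dvd ?_ ?_
    · exact Polynomial.dvd_iff_isRoot.2 (h0 i).2
    · exact Polynomial.dvd_iff_isRoot.2 (h1 i).2
  have hdvd2 : m2 ∣ (P i).1 := by
    refine (hcop.pow).mul_dvd ?_ ?_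
    · exact sq_dvd_of_double_root _ 0 (hval i) (h0 i).1
    · exact sq_dvd_of_double_root _ 1 (h1v i) (h1 i).1
  -- kill v_n
  have hvn : (P i).2 = 0 := by
    rcases Nat.eq_zero_or_pos p with hp | hp
    · exact Polynomial.eq_zero_of_dvd_of_natDegree_lt hdvd1
        (by rw [hm1deg]; have := hdegn i; omega)
    · refine poly_zero_of_dvd_moments m1 _ hm1m (p - 1) (-1) (Or.inr rfl) ?_ hdvd1 ?_
        (fun μ hμ => hmomn hp i μ hμ)
      · intro x hx
        simp only [hm1, Polynomial.eval_mul, Polynomial.eval_sub, Polynomial.eval_X,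
          Polynomial.eval_C]
        obtain ⟨hx0, hx1⟩ := hx
        nlinarith
      · rw [hm1deg]; have := hdegn i; omega
  -- kill v₀
  have hv0 : (P i).1 = 0 := by
    rcases lt_or_ge p 2 with hp | hp
    · refine Polynomial.eq_zero_of_dvd_of_natDegree_lt hdvd2 ?_
      rw [hm2deg]
      have hd := hdeg0 i
      have h3 : (P i).1.natDegree ≤ 3 := by interval_cases p <;> simpa using hd
      omega
    · refine poly_zero_of_dvd_moments m2 _ hm2m (p - 2) 1 (Or.inl rfl) ?_ hdvd2 ?_
        (fun μ hμ => hmom0 hp i μ hμ)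
      · intro x _
        simp only [hm2, Polynomial.eval_mul, Polynomial.eval_pow, Polynomial.eval_sub,
          Polynomial.eval_X, Polynomial.eval_C, one_mul]
        positivity
      · rw [hm2deg]
        have := hdeg0 i
        have hne : p ≠ 0 := by omega
        simp only [hne, if_false] at this
        omega
  simp only [Pi.zero_apply]
  exact Prod.ext hv0 hvn

end
end

section
/- Let V and Y be Hilbert spaces, b : V × Y → ℝ a bounded bilinear form satisfying a continuous inf-sup condition, V_h ⊂ V and P ⊂ Y closed subspaces with discrete inf-sup constants bounded below uniformly; let a : V × V → ℝ be bounded and coercive on the discrete kernel. If (m, λ) solves the saddle point problem with right-hand side f and (m_h, λ_h) solves the Galerkin discretization with perturbed right-hand side f_h, then ‖m − m_h‖_V ≲ inf_{q_h ∈ V_h} ‖m − q_h‖_V + ‖f − f_h‖_{V*}, with constant depending only on the continuity, coercivity, and inf-sup constants. -/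
noncomputable section

set_option maxHeartbeats 1000000

private lemma quad_bound {α M K e t : ℝ} (hα : 0 < α) (hM : 0 ≤ M) (hK : 1 ≤ K)
    (he : 0 ≤ e) (ht : 0 ≤ t) (h : α * e ^ 2 ≤ M * e * t + K * t ^ 2) :
    e ≤ ((M + K) / α + 1) * t := by
  set C := (M + K) / α + 1 with hCdef
  have hC1 : (1:ℝ) ≤ C := by
    have : 0 ≤ (M + K) / α := by positivity
    simp [hCdef]; linarith
  have hCα : C * α = M + K + α := by rw [hCdef, add_mul, div_mul_cancel₀ _ hα.ne', one_mul]
  by_contra hc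
  push_neg at hc
  have hte : t < e := lt_of_le_of_lt (by nlinarith) hc
  have he' : 0 < e := lt_of_le_of_lt ht hte
  nlinarith [mul_lt_mul_of_pos_left hc (mul_pos hα he'), mul_nonneg ht he,
    mul_le_mul_of_nonneg_left hte.le (by nlinarith : (0:ℝ) ≤ K * t)]

private lemma quad_core {α A BB e d g : ℝ} (hA0 : 0 ≤ A) (hBB : 0 ≤ BB)
    (he0 : 0 ≤ e) (hd0 : 0 ≤ d) (hg0 : 0 ≤ g)
    (hmain : α * e ^ 2 ≤ A * e * d + g * (d + e) + BB * d * (g + A * e)) :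
    α * e ^ 2 ≤ (A + 1 + BB * A) * e * (d + g) + (1 + BB) * (d + g) ^ 2 := by
  nlinarith [hmain, mul_nonneg (mul_nonneg hA0 he0) hg0, mul_nonneg he0 hd0, sq_nonneg d,
    sq_nonneg g, mul_nonneg hd0 hg0, mul_nonneg hBB (mul_nonneg hd0 hd0),
    mul_nonneg hBB (mul_nonneg hd0 hg0), mul_nonneg hBB (mul_nonneg hg0 hg0),
    mul_nonneg hBB (mul_nonneg (mul_nonneg hA0 he0) hg0)]

/-- Quasi-optimality with data perturbation for mixed Galerkin methods:
`V, Y` Hilbert spaces, `a, b` bounded bilinear forms, `a` coercive (constant `α`) on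
the continuous and discrete kernels, `b` satisfying continuous (`β`) and discrete
(`βh`) inf-sup conditions with respect to the finite-dimensional multiplier space `P`
and the closed subspace `V_h`.  If `(m, λ)` solves the saddle point problem with
right-hand side `f` and `(m_h, λ_h) ∈ V_h × P` solves the Galerkin discretization with
perturbed right-hand side `f_h`, then
`‖m − m_h‖ ≤ C (inf_{q_h ∈ V_h} ‖m − q_h‖ + ‖f − f_h‖)`, with `C` depending only on
the continuity, coercivity, and inf-sup constants. -/
theorem mixed_galerkin_quasioptimality
    {V Y : Type*}
    [NormedAddCommGroup V] [InnerProductSpace ℝ V] [CompleteSpace V]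
    [NormedAddCommGroup Y] [InnerProductSpace ℝ Y] [CompleteSpace Y]
    (a : V →L[ℝ] V →L[ℝ] ℝ) (b : V →L[ℝ] Y →L[ℝ] ℝ)
    (Vh : Submodule ℝ V) (hVh : IsClosed (Vh : Set V))
    (P : Submodule ℝ Y) [FiniteDimensional ℝ P]
    (α β βh : ℝ) (hα : 0 < α) (hβ : 0 < β) (hβh : 0 < βh)
    (hcoer : ∀ v : V, (∀ μ ∈ P, b v μ = 0) → α * ‖v‖ ^ 2 ≤ a v v)
    (hcoerh : ∀ v ∈ Vh, (∀ μ ∈ P, b v μ = 0) → α * ‖v‖ ^ 2 ≤ a v v)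
    (hinfsup : ∀ μ ∈ P, ∃ v : V, v ≠ 0 ∧ β * ‖v‖ * ‖μ‖ ≤ b v μ)
    (hinfsuph : ∀ μ ∈ P, ∃ v ∈ Vh, v ≠ 0 ∧ βh * ‖v‖ * ‖μ‖ ≤ b v μ) :
    ∃ C > 0, ∀ (f fh : V →L[ℝ] ℝ) (m mh : V) (lam lamh : Y),
      lam ∈ P → lamh ∈ P → mh ∈ Vh →
      (∀ q : V, a m q + b q lam = f q) →
      (∀ μ ∈ P, b m μ = 0) →
      (∀ qh ∈ Vh, a mh qh + b qh lamh = fh qh) →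
      (∀ μ ∈ P, b mh μ = 0) →
      ‖m - mh‖ ≤ C * ((⨅ q : Vh, ‖m - (q : V)‖) + ‖f - fh‖) := by
  set A := ‖a‖ with hA
  set B := ‖b‖ with hB
  have hA0 : 0 ≤ A := norm_nonneg a
  have hB0 : 0 ≤ B := norm_nonneg b
  set M : ℝ := A + 1 + B / βh * A with hM
  set K : ℝ := 1 + B / βh with hK
  have hM0 : 0 ≤ M := by positivity
  have hK1 : 1 ≤ K := by
    have : 0 ≤ B / βh := by positivity
    rw [hK]; linarith
  refine ⟨(M + K) / α + 1, by positivity, ?_⟩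
  intro f fh m mh lam lamh hlam hlamh hmh heq hbm heqh hbmh
  set C := (M + K) / α + 1 with hC
  have hC1 : (1:ℝ) ≤ C := by
    have : 0 ≤ (M + K) / α := by positivity
    rw [hC]; linarith
  have hC0 : (0:ℝ) < C := by linarith
  set e := ‖m - mh‖ with he
  set g := ‖f - fh‖ with hg
  have he0 : 0 ≤ e := norm_nonneg _
  have hg0 : 0 ≤ g := norm_nonneg _
  -- b (m - mh) μ = 0 for μ ∈ P
  have hbu : ∀ μ ∈ P, b (m - mh) μ = 0 := by
    intro μ hμ
    have : b (m - mh) = b m - b mh := map_sub b m mh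
    rw [this, ContinuousLinearMap.sub_apply, hbm μ hμ, hbmh μ hμ, sub_zero]
  -- error equation on Vh
  have herr : ∀ w ∈ Vh, a (m - mh) w = (f - fh) w - b w (lam - lamh) := by
    intro w hw
    have h1 := heq w
    have h2 := heqh w hw
    have e1 : a (m - mh) w = a m w - a mh w := by
      rw [map_sub a m mh, ContinuousLinearMap.sub_apply]
    have e2 : b w (lam - lamh) = b w lam - b w lamh := map_sub (b w) lam lamh
    have e3 : (f - fh) w = f w - fh w := rfl
    rw [e1, e2, e3]; linarith
  -- multiplier bound
  have hμP : lam - lamh ∈ P := P.sub_mem hlam hlamh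
  have hmul : βh * ‖lam - lamh‖ ≤ g + A * e := by
    obtain ⟨v, hvVh, hv0, hiv⟩ := hinfsuph (lam - lamh) hμP
    have hv : 0 < ‖v‖ := norm_pos_iff.mpr hv0
    have h1 : b v (lam - lamh) = (f - fh) v - a (m - mh) v := by
      have := herr v hvVh; linarith
    have h2 : (f - fh) v ≤ g * ‖v‖ := le_trans (le_abs_self _)
      ((f - fh).le_opNorm v)
    have h3 : -(a (m - mh) v) ≤ A * e * ‖v‖ := by
      have := (a.le_opNorm₂ (m - mh) v)
      have habs : |a (m - mh) v| ≤ A * e * ‖v‖ := this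
      have := neg_abs_le (a (m - mh) v)
      linarith [abs_le.mp habs]
    have : βh * ‖v‖ * ‖lam - lamh‖ ≤ (g + A * e) * ‖v‖ := by
      calc βh * ‖v‖ * ‖lam - lamh‖ ≤ b v (lam - lamh) := hiv
        _ = (f - fh) v - a (m - mh) v := h1
        _ ≤ g * ‖v‖ + A * e * ‖v‖ := by linarith
        _ = (g + A * e) * ‖v‖ := by ring
    have := le_of_mul_le_mul_right (by linarith [this] : βh * ‖lam - lamh‖ * ‖v‖ ≤ (g + A * e) * ‖v‖) hv
    linarith
  have hμ0 : 0 ≤ ‖lam - lamh‖ := norm_nonneg _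
  -- key estimate for each q in Vh
  have key : ∀ q : Vh, e ≤ C * (‖m - (q : V)‖ + g) := by
    intro q
    set d := ‖m - (q : V)‖ with hd
    have hd0 : 0 ≤ d := norm_nonneg _
    set t := d + g with ht
    have ht0 : 0 ≤ t := by positivity
    -- coercivity
    have hco := hcoer (m - mh) hbu
    -- splitting
    have hqmh : (q : V) - mh ∈ Vh := Vh.sub_mem q.2 hmh
    have hsplit : a (m - mh) (m - mh)
        = a (m - mh) (m - q) + ((f - fh) ((q : V) - mh) - b ((q : V) - m) (lam - lamh)) := by
      have h1 : a (m - mh) (m - mh) = a (m - mh) (m - q) + a (m - mh) ((q : V) - mh) := by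
        have h0 := map_add (a (m - mh)) (m - (q : V)) ((q : V) - mh)
        have e0 : (m - (q : V)) + ((q : V) - mh) = m - mh := by abel
        rw [e0] at h0
        exact h0
      have h2 := herr ((q : V) - mh) hqmh
      have h3 : b ((q : V) - mh) (lam - lamh)
          = b ((q : V) - m) (lam - lamh) + b (m - mh) (lam - lamh) := by
        have : ((q : V) - mh) = ((q : V) - m) + (m - mh) := by abel
        rw [this, map_add, ContinuousLinearMap.add_apply]
      rw [h1, h2, h3, hbu _ hμP]
      ring
    -- bounds on each term
    have hb1 : a (m - mh) (m - q) ≤ A * e * d := by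
      have habs : |a (m - mh) (m - q)| ≤ A * e * d := a.le_opNorm₂ _ _
      linarith [abs_le.mp habs]
    have hb2 : (f - fh) ((q : V) - mh) ≤ g * (d + e) := by
      have h1 : |(f - fh) ((q : V) - mh)| ≤ g * ‖(q : V) - mh‖ :=
        (f - fh).le_opNorm _
      have h2 : ‖(q : V) - mh‖ ≤ d + e := by
        calc ‖(q : V) - mh‖ = ‖((q : V) - m) + (m - mh)‖ := by rw [show ((q:V) - mh) = ((q:V) - m) + (m - mh) from by abel]
          _ ≤ ‖(q : V) - m‖ + ‖m - mh‖ := norm_add_le _ _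
          _ = d + e := by rw [norm_sub_rev]
      nlinarith [abs_le.mp h1]
    have hb3 : -(b ((q : V) - m) (lam - lamh)) ≤ B * d * ‖lam - lamh‖ := by
      have habs : |b ((q : V) - m) (lam - lamh)| ≤ B * ‖(q : V) - m‖ * ‖lam - lamh‖ :=
        b.le_opNorm₂ _ _
      rw [norm_sub_rev] at habs
      linarith [abs_le.mp habs]
    have hb3' : B * d * ‖lam - lamh‖ * βh ≤ B * d * (g + A * e) :=
      calc B * d * ‖lam - lamh‖ * βh = (B * d) * (βh * ‖lam - lamh‖) := by ring
        _ ≤ (B * d) * (g + A * e) := by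
            apply mul_le_mul_of_nonneg_left hmul (by positivity)
        _ = B * d * (g + A * e) := by ring
    -- combine: α e² ≤ A e d + g (d + e) + B d (g + A e)/βh ≤ M e t + K t²
    have hquad : α * e ^ 2 ≤ M * e * t + K * t ^ 2 := by
      have hBB : (0:ℝ) ≤ B / βh := by positivity
      have hBd : B * d * ‖lam - lamh‖ ≤ B / βh * d * (g + A * e) := by
        rw [div_mul_eq_mul_div, div_mul_eq_mul_div, le_div_iff₀ hβh]
        linarith
      have hmain : α * e ^ 2 ≤ A * e * d + g * (d + e) + B / βh * d * (g + A * e) := by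
        have := hco
        rw [hsplit] at this
        linarith
      rw [hM, hK, ht]
      exact quad_core hA0 hBB he0 hd0 hg0 hmain
    exact quad_bound hα hM0 hK1 he0 ht0 hquad
  -- pass to infimum
  have hne : Nonempty Vh := ⟨0⟩
  have hbdd : BddBelow (Set.range fun q : Vh => ‖m - (q : V)‖) :=
    ⟨0, by rintro x ⟨q, rfl⟩; exact norm_nonneg _⟩
  have hinf : (e - C * g) / C ≤ ⨅ q : Vh, ‖m - (q : V)‖ := by
    apply le_ciInf
    intro q
    rw [div_le_iff₀ hC0]
    have := key q
    nlinarith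
  rw [div_le_iff₀ hC0] at hinf
  nlinarith [hinf]

end
end
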